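/- arXiv:1809.08769 — 12 statements merged into one kernel-verified Lean document; each statement's English description precedes it below -/
import Mathlib

section
/- Let R be a commutative ring, A an m×n matrix over R, k ≥ 1, and let α : Fin k → Fin m and β : Fin k → Fin n be strictly increasing. Then every entry of the m×n matrix μ_{α,β}(A)·A − A·Adj_{α,β}(A)·A lies in the determinantal ideal D_{k+1}(A). -/
open Matrix Polynomial

/-- The `k`-th determinantal ideal of a matrix: the ideal generated by all
`k × k` minors (determinants of submatrices on strictly increasing row and
column selections). -/
noncomputable def detIdeal {R : Type*} [CommRing R] {m n : ℕ} (k : ℕ)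
    (A : Matrix (Fin m) (Fin n) R) : Ideal R :=
  Ideal.span {x | ∃ (α : Fin k → Fin m) (β : Fin k → Fin n),
    StrictMono α ∧ StrictMono β ∧ x = (A.submatrix α β).det}

/-- `Adj_{α,β}(A) = (I_n)_{·,β} · adjugate(A_{α,β}) · (I_m)_{α,·}`. -/
noncomputable def adjSub {R : Type*} [CommRing R] {m n k : ℕ}
    (A : Matrix (Fin m) (Fin n) R) (α : Fin k → Fin m) (β : Fin k → Fin n) :
    Matrix (Fin n) (Fin m) R :=
  (1 : Matrix (Fin n) (Fin n) R).submatrix id β * (A.submatrix α β).adjugate *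
    (1 : Matrix (Fin m) (Fin m) R).submatrix α id


/-!
The `(i, j)` entry of `μ • A - A * Adj * A` is `x * det M - v ⬝ᵥ adj M *ᵥ u`, where `M = A_{α,β}`,
`u`, `v` are column `j` and row `i` of `A` restricted to `α`, `β`, and `x = A i j`. This is the
expansion of the determinant of `M` bordered by `u`, `v` and `x`, i.e. of the submatrix of `A` on
rows `α, i` and columns `β, j`, which is a `(k + 1)`-minor of `A` up to sign (or `0` if an index
repeats). The bordered expansion follows from block elimination when `det M` is a non-zero-divisor,
and in general by specialising `X • 1 + M` over `R[X]` at `X = 0`.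
-/

theorem submatrix_sum_elim_eq_fromBlocks {ι κ μ ν S : Type*} (A : Matrix μ ν S) (α : ι → μ)
    (β : κ → ν) (i : μ) (j : ν) :
    A.submatrix (Sum.elim α fun _ : Fin 1 => i) (Sum.elim β fun _ : Fin 1 => j)
      = fromBlocks (A.submatrix α β) (replicateCol (Fin 1) fun a => A (α a) j)
          (replicateRow (Fin 1) fun b => A i (β b)) (of fun _ _ => A i j) := by
  ext (a | a) (b | b) <;> rfl

section Bordered

variable {R : Type*} [CommRing R] {ι : Type*} [Fintype ι] [DecidableEq ι]

theorem det_fromBlocks_replicate_of_isLeftRegular (M : Matrix ι ι R) (u v : ι → R) (x : R)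
    (hM : IsLeftRegular M.det) :
    (fromBlocks M (replicateCol (Fin 1) u) (replicateRow (Fin 1) v) (of fun _ _ => x)).det
      = x * M.det - v ⬝ᵥ M.adjugate *ᵥ u := by
  have hL : fromBlocks 1 0 (-(replicateRow (Fin 1) v * M.adjugate)) (M.det • 1) *
        fromBlocks M (replicateCol (Fin 1) u) (replicateRow (Fin 1) v) (of fun _ _ => x)
      = fromBlocks M (replicateCol (Fin 1) u) 0
          (of fun _ _ => M.det * x - v ⬝ᵥ M.adjugate *ᵥ u) := by
    rw [fromBlocks_multiply, Matrix.neg_mul, Matrix.mul_assoc, adjugate_mul, Matrix.neg_mul,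
      Matrix.mul_assoc, ← replicateCol_mulVec M.adjugate u, replicateRow_mul_replicateCol]
    ext (a | a) (b | b) <;> simp [sub_eq_neg_add]
  apply hM
  simpa [det_mul, det_fromBlocks_zero₁₂, det_fromBlocks_zero₂₁, mul_comm] using congrArg det hL

theorem det_fromBlocks_replicate (M : Matrix ι ι R) (u v : ι → R) (x : R) :
    (fromBlocks M (replicateCol (Fin 1) u) (replicateRow (Fin 1) v) (of fun _ _ => x)).det
      = x * M.det - v ⬝ᵥ M.adjugate *ᵥ u := by
  let φ : R[X] →+* R := evalRingHom 0
  let M' : Matrix ι ι R[X] := (X : R[X]) • 1 + M.map C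
  have hM' : M'.map φ = M := by
    ext i j
    simp [φ, M', one_apply, apply_ite]
  have hadj : M'.adjugate.map φ = M.adjugate := by
    rw [← RingHom.mapMatrix_apply, RingHom.map_adjugate, RingHom.mapMatrix_apply, hM']
  have hφC : ∀ w : ι → R, φ ∘ C ∘ w = w := fun w => by ext; simp [φ]
  have hM'_monic : M'.det.Monic := leadingCoeff_det_X_one_add_C M
  have h := congrArg φ <| det_fromBlocks_replicate_of_isLeftRegular M' (C ∘ u) (C ∘ v) (C x)
    hM'_monic.isRegular.left
  rw [RingHom.map_det, RingHom.mapMatrix_apply, map_sub, map_mul, RingHom.map_det,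
    RingHom.mapMatrix_apply, hM', RingHom.map_dotProduct, hφC] at h
  convert h using 2
  · ext (a | a) (b | b) <;> simp [φ, ← hM']
  · simp [φ]
  · congr 1
    ext a
    rw [Function.comp_apply, RingHom.map_mulVec, hadj, hφC]

end Bordered

section DetIdeal

variable {R : Type*} [CommRing R] {m n : ℕ}

theorem det_submatrix_mem_detIdeal (A : Matrix (Fin m) (Fin n) R) {l : ℕ}
    (f : Fin l → Fin m) (g : Fin l → Fin n) :
    (A.submatrix f g).det ∈ detIdeal l A := by
  by_cases hf : Function.Injective f
  swap
  · obtain ⟨a, b, hab, hne⟩ := Function.not_injective_iff.mp hf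
    rw [det_zero_of_row_eq hne (by funext p; simp [hab])]
    exact zero_mem _
  by_cases hg : Function.Injective g
  swap
  · obtain ⟨a, b, hab, hne⟩ := Function.not_injective_iff.mp hg
    rw [det_zero_of_column_eq hne (fun p => by simp [hab])]
    exact zero_mem _
  set σ := Tuple.sort f
  set τ := Tuple.sort g
  have hsorted : (A.submatrix (f ∘ σ) (g ∘ τ)).det ∈ detIdeal l A :=
    Ideal.subset_span ⟨f ∘ σ, g ∘ τ,
      (Tuple.monotone_sort f).strictMono_of_injective (hf.comp σ.injective),
      (Tuple.monotone_sort g).strictMono_of_injective (hg.comp τ.injective), rfl⟩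
  have hpermute : A.submatrix f g
      = ((A.submatrix (f ∘ σ) (g ∘ τ)).submatrix σ.symm id).submatrix id τ.symm := by
    ext i j
    simp
  rw [hpermute, det_permute', det_permute]
  exact Ideal.mul_mem_left _ _ (Ideal.mul_mem_left _ _ hsorted)

theorem mul_adjSub_mul_apply {k : ℕ} (A : Matrix (Fin m) (Fin n) R) (α : Fin k → Fin m)
    (β : Fin k → Fin n) (i : Fin m) (j : Fin n) :
    (A * adjSub A α β * A) i j
      = (fun b => A i (β b)) ⬝ᵥ (A.submatrix α β).adjugate *ᵥ (fun a => A (α a) j) := by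
  have hcols : A * (1 : Matrix (Fin n) (Fin n) R).submatrix id β = A.submatrix id β :=
    mul_submatrix_one (Equiv.refl _) β A
  have hrows : (1 : Matrix (Fin m) (Fin m) R).submatrix α id * A = A.submatrix α id :=
    one_submatrix_mul α (Equiv.refl _) A
  rw [adjSub, ← Matrix.mul_assoc, ← Matrix.mul_assoc, hcols, Matrix.mul_assoc _ _ A, hrows,
    mul_apply', dotProduct_mulVec]
  rfl

end DetIdeal

theorem stmt0_general {R : Type*} [CommRing R] {m n k : ℕ}
    (A : Matrix (Fin m) (Fin n) R)
    (α : Fin k → Fin m) (β : Fin k → Fin n) :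
    ∀ i j, ((A.submatrix α β).det • A - A * adjSub A α β * A) i j ∈ detIdeal (k + 1) A := by
  intro i j
  rw [Matrix.sub_apply, Matrix.smul_apply, smul_eq_mul, mul_adjSub_mul_apply, mul_comm,
    ← det_fromBlocks_replicate, ← submatrix_sum_elim_eq_fromBlocks,
    ← det_submatrix_equiv_self finSumFinEquiv.symm, submatrix_submatrix]
  exact det_submatrix_mem_detIdeal A _ _

theorem stmt0 {R : Type*} [CommRing R] {m n k : ℕ} (hk : 1 ≤ k)
    (A : Matrix (Fin m) (Fin n) R)
    (α : Fin k → Fin m) (β : Fin k → Fin n) (hα : StrictMono α) (hβ : StrictMono β) :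
    ∀ i j, ((A.submatrix α β).det • A - A * adjSub A α β * A) i j ∈ detIdeal (k + 1) A :=
  stmt0_general A α β
end

section
/- Let R be a commutative ring and A an m×n matrix over R with D_{k+1}(A) = 0 (all (k+1)×(k+1) minors of A vanish). Then for every strictly increasing α : Fin k → Fin m and β : Fin k → Fin n one has the Cramer identity μ_{α,β}(A)·A = A·Adj_{α,β}(A)·A. -/
open Matrix Polynomial

/-- If all strictly-monotone `N×N` minors vanish, then the determinant of an arbitrary
`N×N` submatrix (with arbitrary row/column selection functions) also vanishes. -/
lemma det_submatrix_zero {R : Type*} [CommRing R] {m n N : ℕ}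
    (A : Matrix (Fin m) (Fin n) R)
    (h0 : ∀ (f : Fin N → Fin m) (g : Fin N → Fin n),
      StrictMono f → StrictMono g → (A.submatrix f g).det = 0)
    (f : Fin N → Fin m) (g : Fin N → Fin n) :
    (A.submatrix f g).det = 0 := by
  by_cases hf : Function.Injective f
  · by_cases hg : Function.Injective g
    · set σ := Tuple.sort f with hσ
      set τ := Tuple.sort g with hτ
      have hfs : StrictMono (f ∘ σ) :=
        (Tuple.monotone_sort f).strictMono_of_injective (hf.comp σ.injective)
      have hgs : StrictMono (g ∘ τ) :=
        (Tuple.monotone_sort g).strictMono_of_injective (hg.comp τ.injective)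
      have key : (A.submatrix (f ∘ σ) (g ∘ τ)).det = 0 := h0 _ _ hfs hgs
      have hrw : A.submatrix f g
          = ((A.submatrix (f ∘ σ) (g ∘ τ)).submatrix σ.symm id).submatrix id τ.symm := by
        ext a b
        simp [Matrix.submatrix_apply]
      rw [hrw, Matrix.det_permute', Matrix.det_permute, key]
      ring
    · obtain ⟨a, b, hab, hne⟩ : ∃ a b, g a = g b ∧ a ≠ b := by
        simpa [Function.Injective, not_forall] using hg
      exact Matrix.det_zero_of_column_eq hne (fun c => by simp [Matrix.submatrix_apply, hab])
  · obtain ⟨a, b, hab, hne⟩ : ∃ a b, f a = f b ∧ a ≠ b := by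
      simpa [Function.Injective, not_forall] using hf
    exact Matrix.det_zero_of_row_eq hne (by funext c; simp [Matrix.submatrix_apply, hab])

/-- Bordered determinant formula:
`det [[M, v], [w, x]] = x * det M - ∑ w b * adj(M) b a * v a`. -/
lemma bordered_det {R : Type*} [CommRing R] {k : ℕ}
    (M : Matrix (Fin k) (Fin k) R) (v w : Fin k → R) (x : R) :
    (Matrix.of (Fin.snoc (fun a => Fin.snoc (M a) (v a)) (Fin.snoc w x))).det
      = x * M.det - ∑ a, ∑ b, w b * M.adjugate b a * v a := by
  cases k with
  | zero =>
    rw [Matrix.det_fin_one]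
    simp [Fin.snoc]
  | succ k =>
    set B : Matrix (Fin (k+2)) (Fin (k+2)) R :=
      Matrix.of (Fin.snoc (fun a => Fin.snoc (M a) (v a)) (Fin.snoc w x)) with hB
    have hcc : B.submatrix Fin.castSucc Fin.castSucc = M := by
      ext a b; simp [hB]
    have hlastrow : ∀ (a : Fin (k+1)),
        (Fin.castSucc a).succAbove (Fin.last k) = Fin.last (k+1) := fun a => by
      rw [Fin.succAbove_of_le_castSucc _ _
        (Fin.castSucc_le_castSucc_iff.mpr (Fin.le_last a)), Fin.succ_last]
    have hdet : ∀ (a c : Fin (k+1)),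
        (M.submatrix (Fin.succAbove a) (Fin.succAbove c)).det
          = (-1 : R)^((a:ℕ)+(c:ℕ)) * M.adjugate c a := by
      intro a c
      rw [Matrix.adjugate_fin_succ_eq_det_submatrix, ← mul_assoc, ← pow_add,
        Even.neg_one_pow ⟨(a:ℕ)+(c:ℕ), by ring⟩, one_mul]
    have hNa : ∀ a : Fin (k+1), (B.submatrix (Fin.castSucc a).succAbove Fin.castSucc).det
        = ∑ c : Fin (k+1),
            (-1 : R)^(k + (c:ℕ)) * w c * ((-1 : R)^((a:ℕ)+(c:ℕ)) * M.adjugate c a) := by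
      intro a
      rw [Matrix.det_succ_row _ (Fin.last k)]
      refine Finset.sum_congr rfl fun c _ => ?_
      have hmin : ((B.submatrix (Fin.castSucc a).succAbove Fin.castSucc).submatrix
          (Fin.last k).succAbove c.succAbove) = M.submatrix a.succAbove c.succAbove := by
        ext d e
        simp [hB, Matrix.submatrix_apply, Fin.succAbove_last,
          Fin.castSucc_succAbove_castSucc]
      rw [hmin, hdet, Matrix.submatrix_apply, hlastrow a]
      simp [hB]
    rw [Matrix.det_succ_column _ (Fin.last (k + 1)), Fin.sum_univ_castSucc]
    simp only [Fin.succAbove_last, hcc, hNa, Fin.coe_castSucc, Fin.val_last]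
    have hBv : ∀ a : Fin (k+1), B (Fin.castSucc a) (Fin.last (k+1)) = v a := by
      intro a; simp [hB]
    have hBx : B (Fin.last (k+1)) (Fin.last (k+1)) = x := by simp [hB]
    simp only [hBv, hBx]
    have key : ∀ a : Fin (k+1), (-1:R)^((a:ℕ) + (k+1)) * v a *
        (∑ c : Fin (k+1), (-1:R)^(k+(c:ℕ)) * w c * ((-1:R)^((a:ℕ)+(c:ℕ)) * M.adjugate c a))
        = -∑ c : Fin (k+1), w c * M.adjugate c a * v a := by
      intro a
      rw [Finset.mul_sum, ← Finset.sum_neg_distrib]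
      refine Finset.sum_congr rfl fun c _ => ?_
      have hs : (-1:R)^((a:ℕ)+(k+1)) * ((-1:R)^(k+(c:ℕ)) * (-1:R)^((a:ℕ)+(c:ℕ))) = -1 := by
        rw [← pow_add, ← pow_add]
        exact Odd.neg_one_pow ⟨(a:ℕ)+(c:ℕ)+k, by ring⟩
      linear_combination (v a * w c * M.adjugate c a) * hs
    simp only [key]
    have h1 : ((-1:R))^((k+1)+(k+1)) = 1 := Even.neg_one_pow ⟨k+1, by ring⟩
    rw [h1, Finset.sum_neg_distrib]
    ring

theorem stmt1 {R : Type*} [CommRing R] {m n k : ℕ}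
    (A : Matrix (Fin m) (Fin n) R) (hA : detIdeal (k + 1) A = ⊥)
    (α : Fin k → Fin m) (β : Fin k → Fin n) (hα : StrictMono α) (hβ : StrictMono β) :
    (A.submatrix α β).det • A = A * adjSub A α β * A := by
  have h0 : ∀ (f : Fin (k+1) → Fin m) (g : Fin (k+1) → Fin n),
      StrictMono f → StrictMono g → (A.submatrix f g).det = 0 := by
    intro f g hf hg
    have hmem : (A.submatrix f g).det ∈ detIdeal (k+1) A :=
      Ideal.subset_span ⟨f, g, hf, hg, rfl⟩
    rwa [hA, Ideal.mem_bot] at hmem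
  have h1 : A * ((1 : Matrix (Fin n) (Fin n) R).submatrix id β) = A.submatrix id β := by
    ext i b
    simp [Matrix.mul_apply, Matrix.one_apply]
  have h2 : ((1 : Matrix (Fin m) (Fin m) R).submatrix α id) * A = A.submatrix α id := by
    ext a j
    simp [Matrix.mul_apply, Matrix.one_apply]
  have hprod : A * adjSub A α β * A
      = (A.submatrix id β) * (A.submatrix α β).adjugate * (A.submatrix α id) := by
    rw [adjSub, ← h1, ← h2]
    simp only [Matrix.mul_assoc]
  rw [hprod]
  ext i j
  have hBsub : (Matrix.of (Fin.snoc (fun a => Fin.snoc ((A.submatrix α β) a) (A (α a) j))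
      (Fin.snoc (fun b => A i (β b)) (A i j))))
        = A.submatrix (Fin.snoc α i) (Fin.snoc β j) := by
    ext p q
    induction p using Fin.lastCases with
    | last =>
      induction q using Fin.lastCases with
      | last => simp
      | cast b => simp
    | cast a =>
      induction q using Fin.lastCases with
      | last => simp
      | cast b => simp
  have hb := bordered_det (A.submatrix α β) (fun a => A (α a) j) (fun b => A i (β b)) (A i j)
  rw [hBsub, det_submatrix_zero A h0] at hb
  have hmain : A i j * (A.submatrix α β).det
      = ∑ a, ∑ b, A i (β b) * (A.submatrix α β).adjugate b a * A (α a) j :=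
    eq_of_sub_eq_zero hb.symm
  simp only [Matrix.smul_apply, smul_eq_mul, Matrix.mul_apply, Matrix.submatrix_apply, id_eq,
    Finset.sum_mul]
  rw [← hmain, mul_comm]
end

section
/- Let R be a commutative ring and A an m×n matrix over R with D_{k+1}(A) = 0. Suppose there is a family of coefficients c_{α,β} ∈ R, indexed by the strictly increasing maps α : Fin k → Fin m and β : Fin k → Fin n, such that Σ_{α,β} c_{α,β}·μ_{α,β}(A) = 1. Then the n×m matrix B := Σ_{α,β} c_{α,β}·Adj_{α,β}(A) satisfies A·B·A = A. Consequently A·B is an idempotent matrix ((A·B)² = A·B), the range of the linear map x ↦ A·x equals the range of x ↦ (A·B)·x, and this range is a direct summand of R^m. -/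
open Matrix Polynomial
open scoped Classical

/-- The bordered determinant. -/
noncomputable def bd {R : Type*} [CommRing R] {k : ℕ} (S : Matrix (Fin k) (Fin k) R)
    (v w : Fin k → R) (x : R) : R :=
  (Matrix.fromBlocks S (Matrix.of fun a (_ : Fin 1) => v a)
    (Matrix.of fun (_ : Fin 1) b => w b) (Matrix.of fun _ _ => x)).det

noncomputable def rhsE {R : Type*} [CommRing R] {k : ℕ} (S : Matrix (Fin k) (Fin k) R)
    (v w : Fin k → R) (x : R) : R :=
  x * S.det - ∑ a, ∑ b, w b * S.adjugate b a * v a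

lemma map_bd {P R : Type*} [CommRing P] [CommRing R] {k : ℕ} (f : P →+* R)
    (S : Matrix (Fin k) (Fin k) P) (v w : Fin k → P) (x : P) :
    f (bd S v w x) = bd (S.map f) (fun a => f (v a)) (fun b => f (w b)) (f x) := by
  unfold bd
  rw [RingHom.map_det]
  congr 1
  ext p q
  rcases p with p | p <;> rcases q with q | q <;> rfl

lemma map_rhsE {P R : Type*} [CommRing P] [CommRing R] {k : ℕ} (f : P →+* R)
    (S : Matrix (Fin k) (Fin k) P) (v w : Fin k → P) (x : P) :
    f (rhsE S v w x) = rhsE (S.map f) (fun a => f (v a)) (fun b => f (w b)) (f x) := by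
  have hadj : ∀ b a, f (S.adjugate b a) = (S.map f).adjugate b a := by
    intro b a
    rw [← RingHom.mapMatrix_apply, ← f.map_adjugate]
    rfl
  unfold rhsE
  rw [map_sub, _root_.map_mul, RingHom.map_det, map_sum]
  simp only [map_sum, _root_.map_mul, hadj, RingHom.mapMatrix_apply]

lemma bd_eq_of_isUnit {R : Type*} [CommRing R] {k : ℕ} (S : Matrix (Fin k) (Fin k) R)
    (v w : Fin k → R) (x : R) (h : IsUnit S.det) : bd S v w x = rhsE S v w x := by
  have hS : Invertible S := S.invertibleOfIsUnitDet h
  have hd : Invertible S.det := S.detInvertibleOfInvertible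
  unfold bd rhsE
  rw [Matrix.det_fromBlocks₁₁, Matrix.det_fin_one]
  have hentry : (Matrix.of (fun (_ : Fin 1) (_ : Fin 1) => x) -
      Matrix.of (fun (_ : Fin 1) b => w b) * ⅟S * Matrix.of (fun a (_ : Fin 1) => v a)) 0 0
      = x - ∑ a, ∑ b, w b * (⅟S) b a * v a := by
    simp [Matrix.sub_apply, Matrix.mul_apply, Finset.sum_mul, mul_assoc]
  rw [hentry, mul_sub, Finset.mul_sum]
  have hadj : ∀ b a, S.det * (⅟S) b a = S.adjugate b a := by
    intro b a
    rw [Matrix.invOf_eq, Matrix.smul_apply, smul_eq_mul, ← mul_assoc, mul_invOf_self, one_mul]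
  congr 1
  · ring
  · refine Finset.sum_congr rfl fun a _ => ?_
    rw [Finset.mul_sum]
    refine Finset.sum_congr rfl fun b _ => ?_
    rw [← hadj b a]
    ring

lemma bd_eq {R : Type*} [CommRing R] {k : ℕ} (S : Matrix (Fin k) (Fin k) R)
    (v w : Fin k → R) (x : R) : bd S v w x = rhsE S v w x := by
  classical
  let S0 : Matrix (Fin k) (Fin k) (MvPolynomial ((Fin k × Fin k) ⊕ (Fin k ⊕ (Fin k ⊕ Unit))) ℤ) :=
    Matrix.of fun i j => MvPolynomial.X (Sum.inl (i, j))
  let v0 : Fin k → MvPolynomial ((Fin k × Fin k) ⊕ (Fin k ⊕ (Fin k ⊕ Unit))) ℤ :=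
    fun a => MvPolynomial.X (Sum.inr (Sum.inl a))
  let w0 : Fin k → MvPolynomial ((Fin k × Fin k) ⊕ (Fin k ⊕ (Fin k ⊕ Unit))) ℤ :=
    fun b => MvPolynomial.X (Sum.inr (Sum.inr (Sum.inl b)))
  let x0 : MvPolynomial ((Fin k × Fin k) ⊕ (Fin k ⊕ (Fin k ⊕ Unit))) ℤ :=
    MvPolynomial.X (Sum.inr (Sum.inr (Sum.inr ())))
  have hS0det : S0.det ≠ 0 := by
    have hren : S0.det =
        MvPolynomial.rename Sum.inl (Matrix.mvPolynomialX (Fin k) (Fin k) ℤ).det := by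
      conv_rhs => rw [AlgHom.map_det]
      congr 1
      ext i j
      simp [S0, Matrix.mvPolynomialX]
    rw [hren]
    intro hz
    exact Matrix.det_mvPolynomialX_ne_zero (Fin k) ℤ
      (MvPolynomial.rename_injective Sum.inl Sum.inl_injective
        (by simpa using hz))
  have hgen : bd S0 v0 w0 x0 = rhsE S0 v0 w0 x0 := by
    have hinj : Function.Injective (algebraMap
        (MvPolynomial ((Fin k × Fin k) ⊕ (Fin k ⊕ (Fin k ⊕ Unit))) ℤ)
        (FractionRing (MvPolynomial ((Fin k × Fin k) ⊕ (Fin k ⊕ (Fin k ⊕ Unit))) ℤ))) :=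
      IsFractionRing.injective _ _
    apply hinj
    rw [map_bd ((algebraMap _ _) : MvPolynomial ((Fin k × Fin k) ⊕ (Fin k ⊕ (Fin k ⊕ Unit))) ℤ →+*
        FractionRing (MvPolynomial ((Fin k × Fin k) ⊕ (Fin k ⊕ (Fin k ⊕ Unit))) ℤ)),
      map_rhsE]
    apply bd_eq_of_isUnit
    rw [← RingHom.mapMatrix_apply, ← RingHom.map_det, isUnit_iff_ne_zero]
    intro hz
    exact hS0det (hinj (by simpa using hz))
  let f : MvPolynomial ((Fin k × Fin k) ⊕ (Fin k ⊕ (Fin k ⊕ Unit))) ℤ →+* R :=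
    MvPolynomial.eval₂Hom (Int.castRingHom R)
      (Sum.elim (fun p => S p.1 p.2) (Sum.elim v (Sum.elim w (fun _ => x))))
  have h1 := congrArg f hgen
  rw [map_bd f, map_rhsE f] at h1
  have hSm : S0.map f = S := by
    ext i j; simp [S0, f, Matrix.map_apply, MvPolynomial.eval₂Hom_X']
  have hvm : (fun a => f (v0 a)) = v := by
    funext a; simp [v0, f, MvPolynomial.eval₂Hom_X']
  have hwm : (fun b => f (w0 b)) = w := by
    funext b; simp [w0, f, MvPolynomial.eval₂Hom_X']
  have hxm : f x0 = x := by simp [x0, f, MvPolynomial.eval₂Hom_X']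
  rwa [hSm, hvm, hwm, hxm] at h1

lemma exists_strictMono_factor {N m : ℕ} (f : Fin N → Fin m) (hf : Function.Injective f) :
    ∃ (g : Fin N → Fin m) (σ : Equiv.Perm (Fin N)), StrictMono g ∧ f = g ∘ σ := by
  classical
  set s : Finset (Fin m) := Finset.univ.image f with hs_def
  have hs : s.card = N := by
    rw [hs_def, Finset.card_image_of_injective _ hf, Finset.card_univ, Fintype.card_fin]
  let g0 := s.orderIsoOfFin hs
  let e : Fin N → Fin N := fun i =>
    g0.symm ⟨f i, Finset.mem_image_of_mem f (Finset.mem_univ i)⟩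
  have hfe : ∀ i, f i = ((g0 (e i) : s) : Fin m) := by
    intro i; simp [e]
  have he : Function.Injective e := by
    intro i j h
    apply hf
    rw [hfe i, hfe j, h]
  let σ := Equiv.ofBijective e (Finite.injective_iff_bijective.mp he)
  refine ⟨fun a => ((g0 a : s) : Fin m), σ, ?_, ?_⟩
  · exact (Subtype.strictMono_coe _).comp g0.strictMono
  · funext i
    exact hfe i

lemma minor_zero {R : Type*} [CommRing R] {m n k : ℕ} (A : Matrix (Fin m) (Fin n) R)
    (hA : detIdeal (k + 1) A = ⊥) (r : Fin (k + 1) → Fin m) (c : Fin (k + 1) → Fin n) :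
    (A.submatrix r c).det = 0 := by
  classical
  have hgen : ∀ (α : Fin (k + 1) → Fin m) (β : Fin (k + 1) → Fin n),
      StrictMono α → StrictMono β → (A.submatrix α β).det = 0 := by
    intro α β hα hβ
    have hmem : (A.submatrix α β).det ∈ detIdeal (k + 1) A :=
      Ideal.subset_span ⟨α, β, hα, hβ, rfl⟩
    rw [hA] at hmem
    simpa using hmem
  by_cases hr : Function.Injective r
  · by_cases hc : Function.Injective c
    · obtain ⟨g1, σ, hg1, hfr⟩ := exists_strictMono_factor r hr
      obtain ⟨g2, τ, hg2, hfc⟩ := exists_strictMono_factor c hc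
      have hsub : A.submatrix r c = ((A.submatrix g1 g2).submatrix id τ).submatrix σ id := by
        rw [Matrix.submatrix_submatrix, Matrix.submatrix_submatrix, hfr, hfc]
        rfl
      rw [hsub, Matrix.det_permute, Matrix.det_permute', hgen g1 g2 hg1 hg2,
        mul_zero, mul_zero]
    · obtain ⟨i, j, hij, hne⟩ := Function.not_injective_iff.mp hc
      refine Matrix.det_zero_of_column_eq hne fun p => ?_
      simp [Matrix.submatrix_apply, hij]
  · obtain ⟨i, j, hij, hne⟩ := Function.not_injective_iff.mp hr
    refine Matrix.det_zero_of_row_eq hne ?_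
    funext p
    simp [Matrix.submatrix_apply, hij]

lemma mul_adjSub_mul {R : Type*} [CommRing R] {m n k : ℕ} (A : Matrix (Fin m) (Fin n) R)
    (hA : detIdeal (k + 1) A = ⊥) (α : Fin k → Fin m) (β : Fin k → Fin n) :
    A * adjSub A α β * A = (A.submatrix α β).det • A := by
  classical
  have h1 : A * (1 : Matrix (Fin n) (Fin n) R).submatrix id β = A.submatrix id β := by
    ext p b
    simp [Matrix.mul_apply, Matrix.one_apply]
  have h2 : (1 : Matrix (Fin m) (Fin m) R).submatrix α id * A = A.submatrix α id := by
    ext a q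
    simp [Matrix.mul_apply, Matrix.one_apply]
  have hform : A * adjSub A α β * A =
      A.submatrix id β * (A.submatrix α β).adjugate * A.submatrix α id := by
    unfold adjSub
    rw [← h1, ← h2]
    simp only [Matrix.mul_assoc]
  ext i j
  have hbd0 : bd (A.submatrix α β) (fun a => A (α a) j) (fun b => A i (β b)) (A i j) = 0 := by
    unfold bd
    have hfb : Matrix.fromBlocks (A.submatrix α β)
        (Matrix.of fun a (_ : Fin 1) => A (α a) j)
        (Matrix.of fun (_ : Fin 1) b => A i (β b))
        (Matrix.of fun (_ : Fin 1) (_ : Fin 1) => A i j)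
        = A.submatrix (Sum.elim α fun _ => i) (Sum.elim β fun _ => j) := by
      ext p q
      rcases p with p | p <;> rcases q with q | q <;> rfl
    rw [hfb]
    have := minor_zero A hA ((Sum.elim α fun _ => i) ∘ (finSumFinEquiv (m := k) (n := 1)).symm)
      ((Sum.elim β fun _ => j) ∘ (finSumFinEquiv (m := k) (n := 1)).symm)
    rw [← Matrix.det_submatrix_equiv_self (finSumFinEquiv (m := k) (n := 1)).symm
      (A.submatrix (Sum.elim α fun _ => i) (Sum.elim β fun _ => j))]
    simpa [Matrix.submatrix_submatrix] using this
  have hkey := (bd_eq (A.submatrix α β) (fun a => A (α a) j) (fun b => A i (β b)) (A i j)).symm.trans hbd0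
  unfold rhsE at hkey
  rw [hform, Matrix.smul_apply, smul_eq_mul]
  rw [Matrix.mul_apply]
  simp only [Matrix.mul_apply, Matrix.submatrix_apply, id_eq, Finset.sum_mul]
  linear_combination -hkey

theorem stmt2 {R : Type*} [CommRing R] {m n k : ℕ}
    (A : Matrix (Fin m) (Fin n) R) (hA : detIdeal (k + 1) A = ⊥)
    (c : (Fin k → Fin m) → (Fin k → Fin n) → R)
    (hc : ∑ α ∈ Finset.univ.filter (fun α : Fin k → Fin m => StrictMono α),
            ∑ β ∈ Finset.univ.filter (fun β : Fin k → Fin n => StrictMono β),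
              c α β * (A.submatrix α β).det = 1) :
    A * (∑ α ∈ Finset.univ.filter (fun α : Fin k → Fin m => StrictMono α),
          ∑ β ∈ Finset.univ.filter (fun β : Fin k → Fin n => StrictMono β),
            c α β • adjSub A α β) * A = A ∧
    (A * (∑ α ∈ Finset.univ.filter (fun α : Fin k → Fin m => StrictMono α),
          ∑ β ∈ Finset.univ.filter (fun β : Fin k → Fin n => StrictMono β),
            c α β • adjSub A α β)) *
      (A * (∑ α ∈ Finset.univ.filter (fun α : Fin k → Fin m => StrictMono α),
          ∑ β ∈ Finset.univ.filter (fun β : Fin k → Fin n => StrictMono β),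
            c α β • adjSub A α β)) =
      A * (∑ α ∈ Finset.univ.filter (fun α : Fin k → Fin m => StrictMono α),
          ∑ β ∈ Finset.univ.filter (fun β : Fin k → Fin n => StrictMono β),
            c α β • adjSub A α β) ∧
    LinearMap.range A.mulVecLin =
      LinearMap.range (A * (∑ α ∈ Finset.univ.filter (fun α : Fin k → Fin m => StrictMono α),
          ∑ β ∈ Finset.univ.filter (fun β : Fin k → Fin n => StrictMono β),
            c α β • adjSub A α β)).mulVecLin ∧
    ∃ q : Submodule R (Fin m → R), IsCompl (LinearMap.range A.mulVecLin) q := by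
  classical
  set B : Matrix (Fin n) (Fin m) R :=
    ∑ α ∈ Finset.univ.filter (fun α : Fin k → Fin m => StrictMono α),
      ∑ β ∈ Finset.univ.filter (fun β : Fin k → Fin n => StrictMono β),
        c α β • adjSub A α β with hB
  have hABA : A * B * A = A := by
    rw [hB]
    calc A * (∑ α ∈ Finset.univ.filter (fun α : Fin k → Fin m => StrictMono α),
          ∑ β ∈ Finset.univ.filter (fun β : Fin k → Fin n => StrictMono β),
            c α β • adjSub A α β) * A
        = ∑ α ∈ Finset.univ.filter (fun α : Fin k → Fin m => StrictMono α),
          ∑ β ∈ Finset.univ.filter (fun β : Fin k → Fin n => StrictMono β),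
            (c α β * (A.submatrix α β).det) • A := by
          simp only [Matrix.mul_sum, Matrix.sum_mul, Matrix.mul_smul, Matrix.smul_mul,
            mul_adjSub_mul A hA, smul_smul]
      _ = A := by
          simp only [← Finset.sum_smul]
          rw [hc, one_smul]
  have hsq : (A * B) * (A * B) = A * B := by
    rw [← Matrix.mul_assoc, hABA]
  have hrange : LinearMap.range A.mulVecLin = LinearMap.range (A * B).mulVecLin := by
    apply le_antisymm
    · conv_lhs => rw [← hABA]
      rw [Matrix.mulVecLin_mul]
      exact LinearMap.range_comp_le_range _ _
    · rw [Matrix.mulVecLin_mul]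
      exact LinearMap.range_comp_le_range _ _
  refine ⟨hABA, hsq, hrange, ?_⟩
  set e := (A * B).mulVecLin with he
  have hee : e ∘ₗ e = e := by
    rw [he, ← Matrix.mulVecLin_mul, hsq]
  have hproj : LinearMap.IsProj (LinearMap.range e) e := by
    refine ⟨fun x => ⟨x, rfl⟩, ?_⟩
    rintro _ ⟨y, rfl⟩
    exact LinearMap.ext_iff.mp hee y
  exact ⟨LinearMap.ker e, by rw [hrange]; exact hproj.isCompl⟩
end

section
/- (Freeness lemma) Let R be a commutative ring and A an m×n matrix over R such that D_{k+1}(A) = 0 and some k×k minor of A is a unit of R. Then A is simple of rank k: there exist invertible matrices U ∈ GL_m(R) and V ∈ GL_n(R) such that A = U · I_{k,m,n} · V, where I_{k,m,n} denotes the m×n matrix whose first k diagonal entries are 1 and all other entries are 0. -/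
/-!
Reindex rows and columns so that the unit minor `B` sits in the top-left corner, turning `A` into
a block matrix `[B D; C E]`. Each entry of the Schur complement `E - C B⁻¹ D` is, up to the unit
factor `det B`, a bordered `(k+1)`-minor of `A`, so it vanishes. Hence
`[B D; C C B⁻¹ D] = [B 0; C 1] * [1 0; 0 0] * [1 B⁻¹ D; 0 1]`, with outer factors of determinant
`det B` and `1`.
-/

open Matrix

/-- `I_{k,m,n}`: the `m × n` matrix with the first `k` diagonal entries equal to `1`
and all other entries `0`. -/
def stdRankMatrix (R : Type*) [CommRing R] (k m n : ℕ) : Matrix (Fin m) (Fin n) R :=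
  Matrix.of fun i j => if (i : ℕ) = (j : ℕ) ∧ (i : ℕ) < k then 1 else 0

theorem Function.Injective.exists_sumEquiv_inl_eq {κ ι ι' : Type*} [Fintype κ] [Fintype ι]
    [Fintype ι'] {α : κ → ι} (hα : Function.Injective α)
    (hcard : Fintype.card κ + Fintype.card ι' = Fintype.card ι) :
    ∃ e : κ ⊕ ι' ≃ ι, ∀ i, e (Sum.inl i) = α i := by
  classical
  have hcompl : Fintype.card ι' = Fintype.card {x // x ∉ Set.range α} := by
    rw [Fintype.card_subtype_compl, Set.card_range_of_injective hα]
    omega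
  exact ⟨(Equiv.sumCongr (Equiv.ofInjective α hα) (Fintype.equivOfCardEq hcompl)).trans
    (Equiv.sumCompl _), fun _ => rfl⟩

section

variable {R : Type*} [CommRing R]

theorem stdRankMatrix_submatrix_finSumFinEquiv (k a b : ℕ) :
    (stdRankMatrix R k (k + a) (k + b)).submatrix finSumFinEquiv finSumFinEquiv =
      fromBlocks 1 0 0 0 := by
  ext (i | i) (j | j) <;> simp [stdRankMatrix, one_apply, Fin.ext_iff]
  omega

theorem Equiv.Perm.isUnit_intCast_sign {n : Type*} [Fintype n] [DecidableEq n] (σ : Perm n) :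
    IsUnit (sign σ : R) :=
  (sign σ).isUnit.map (Int.castRingHom R)

namespace Matrix

theorem isUnit_det_submatrix_equiv {m n : Type*} [Fintype m] [DecidableEq m] [Fintype n]
    [DecidableEq n] {U : Matrix m m R} (hU : IsUnit U.det) (e₁ e₂ : n ≃ m) :
    IsUnit (U.submatrix e₁ e₂).det := by
  have hperm : U.submatrix e₁ e₂ = (U.submatrix e₂ e₂).submatrix (e₁.trans e₂.symm) id := by
    ext i j
    simp
  rw [hperm, det_permute, det_submatrix_equiv_self]
  exact (Equiv.Perm.isUnit_intCast_sign _).mul hU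

theorem det_submatrix_eq_zero_of_detIdeal_eq_bot {m n k : ℕ} {A : Matrix (Fin m) (Fin n) R}
    (hA : detIdeal k A = ⊥) {ι : Type*} [Fintype ι] [DecidableEq ι] (hι : Fintype.card ι = k)
    (f : ι → Fin m) (g : ι → Fin n) : (A.submatrix f g).det = 0 := by
  let e := Fintype.equivFinOfCardEq hι
  rw [← det_submatrix_equiv_self e.symm, submatrix_submatrix]
  set f' := f ∘ e.symm
  set g' := g ∘ e.symm
  by_cases hf : Function.Injective f'
  swap
  · obtain ⟨a, b, hab, hne⟩ := Function.not_injective_iff.mp hf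
    exact det_zero_of_row_eq hne (funext fun c => by simp [hab])
  by_cases hg : Function.Injective g'
  swap
  · obtain ⟨a, b, hab, hne⟩ := Function.not_injective_iff.mp hg
    exact det_zero_of_column_eq hne fun r => by simp [hab]
  set σ := Tuple.sort f'
  set τ := Tuple.sort g'
  have hsorted : (A.submatrix (f' ∘ σ) (g' ∘ τ)).det ∈ detIdeal k A :=
    Ideal.subset_span ⟨_, _,
      (Tuple.monotone_sort f').strictMono_of_injective (hf.comp σ.injective),
      (Tuple.monotone_sort g').strictMono_of_injective (hg.comp τ.injective), rfl⟩
  have hsign : (A.submatrix (f' ∘ σ) (g' ∘ τ)).det =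
      Equiv.Perm.sign τ * (Equiv.Perm.sign σ * (A.submatrix f' g').det) := by
    rw [← det_permute, ← det_permute']
    rfl
  rw [hA, Ideal.mem_bot, hsign] at hsorted
  exact (Equiv.Perm.isUnit_intCast_sign σ).mul_right_eq_zero.mp
    ((Equiv.Perm.isUnit_intCast_sign τ).mul_right_eq_zero.mp hsorted)

section Blocks

variable {κ l o : Type*} [Fintype κ] [DecidableEq κ]

theorem eq_mul_invOf_mul_of_det_bordered_eq_zero {B : Matrix κ κ R} [Invertible B]
    {C : Matrix l κ R} {D : Matrix κ o R} {E : Matrix l o R}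
    (h : ∀ i j, ((fromBlocks B D C E).submatrix (Sum.map id fun _ : Unit => i)
      (Sum.map id fun _ : Unit => j)).det = 0) :
    E = C * ⅟B * D := by
  ext i j
  have hbordered : (fromBlocks B D C E).submatrix (Sum.map id fun _ : Unit => i)
      (Sum.map id fun _ : Unit => j) =
      fromBlocks B (D.submatrix id fun _ => j) (C.submatrix (fun _ => i) id)
        (of fun _ _ => E i j) := by
    ext (a | a) (b | b) <;> rfl
  have hschur := h i j
  rw [hbordered, det_fromBlocks₁₁, (isUnit_det_of_invertible B).mul_right_eq_zero,
    det_unique] at hschur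
  simpa [sub_eq_zero, mul_apply] using hschur

theorem exists_fromBlocks_eq_mul_fromBlocks_one_zero_mul [Fintype l] [DecidableEq l]
    [Fintype o] [DecidableEq o] (B : Matrix κ κ R) [Invertible B] (C : Matrix l κ R)
    (D : Matrix κ o R) :
    ∃ (U : Matrix (κ ⊕ l) (κ ⊕ l) R) (V : Matrix (κ ⊕ o) (κ ⊕ o) R),
      IsUnit U.det ∧ IsUnit V.det ∧
      fromBlocks B D C (C * ⅟B * D) =
        U * fromBlocks (1 : Matrix κ κ R) 0 0 (0 : Matrix l o R) * V :=
  ⟨fromBlocks B 0 C 1, fromBlocks 1 (⅟B * D) 0 1, by simpa using isUnit_det_of_invertible B,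
    by simp, by simp [fromBlocks_multiply, Matrix.mul_assoc]⟩

end Blocks

theorem exists_eq_mul_mul_of_submatrix_equiv {m n m' n' : Type*} [Fintype m] [DecidableEq m]
    [Fintype n] [DecidableEq n] [Fintype m'] [DecidableEq m'] [Fintype n'] [DecidableEq n']
    {A S : Matrix m n R} (eM fM : m' ≃ m) (eN fN : n' ≃ n)
    (h : ∃ (U : Matrix m' m' R) (V : Matrix n' n' R), IsUnit U.det ∧ IsUnit V.det ∧
      A.submatrix eM eN = U * S.submatrix fM fN * V) :
    ∃ (U : Matrix m m R) (V : Matrix n n R), IsUnit U.det ∧ IsUnit V.det ∧ A = U * S * V := by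
  obtain ⟨U, V, hU, hV, hUV⟩ := h
  refine ⟨U.submatrix eM.symm fM.symm, V.submatrix fN.symm eN.symm,
    isUnit_det_submatrix_equiv hU _ _, isUnit_det_submatrix_equiv hV _ _, ?_⟩
  have hA : A = (U * S.submatrix fM fN * V).submatrix eM.symm eN.symm := by
    rw [← hUV, submatrix_submatrix]
    simp
  rw [hA, ← submatrix_mul_equiv _ _ _ fN.symm, ← submatrix_mul_equiv _ _ _ fM.symm]
  simp

end Matrix

end

/-- Freeness lemma. -/
theorem stmt4 {R : Type*} [CommRing R] {m n k : ℕ}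
    (A : Matrix (Fin m) (Fin n) R) (hA : detIdeal (k + 1) A = ⊥)
    (hminor : ∃ (α : Fin k → Fin m) (β : Fin k → Fin n),
      StrictMono α ∧ StrictMono β ∧ IsUnit (A.submatrix α β).det) :
    ∃ (U : Matrix (Fin m) (Fin m) R) (V : Matrix (Fin n) (Fin n) R),
      IsUnit U.det ∧ IsUnit V.det ∧ A = U * stdRankMatrix R k m n * V := by
  obtain ⟨α, β, hα, hβ, hdet⟩ := hminor
  have hkm : k ≤ m := by simpa using Fintype.card_le_of_injective α hα.injective
  have hkn : k ≤ n := by simpa using Fintype.card_le_of_injective β hβ.injective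
  obtain ⟨a, rfl⟩ := Nat.exists_eq_add_of_le hkm
  obtain ⟨b, rfl⟩ := Nat.exists_eq_add_of_le hkn
  obtain ⟨eM, heM⟩ := hα.injective.exists_sumEquiv_inl_eq (ι' := Fin a) (by simp)
  obtain ⟨eN, heN⟩ := hβ.injective.exists_sumEquiv_inl_eq (ι' := Fin b) (by simp)
  set M := A.submatrix eM eN with hM
  have hB : M.toBlocks₁₁ = A.submatrix α β := by
    ext
    simp [M, toBlocks₁₁, heM, heN]
  have : Invertible M.toBlocks₁₁ := M.toBlocks₁₁.invertibleOfIsUnitDet (hB ▸ hdet)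
  have hschur : M.toBlocks₂₂ = M.toBlocks₂₁ * ⅟M.toBlocks₁₁ * M.toBlocks₁₂ := by
    refine eq_mul_invOf_mul_of_det_bordered_eq_zero fun i j => ?_
    rw [fromBlocks_toBlocks, submatrix_submatrix]
    exact det_submatrix_eq_zero_of_detIdeal_eq_bot hA (by simp) _ _
  refine exists_eq_mul_mul_of_submatrix_equiv eM finSumFinEquiv eN finSumFinEquiv ?_
  rw [stdRankMatrix_submatrix_finSumFinEquiv, ← hM, ← fromBlocks_toBlocks M, hschur]
  exact exists_fromBlocks_eq_mul_fromBlocks_one_zero_mul _ _ _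
end

section
/- Let R be a commutative ring, E and F two R-modules, and let φ : E → F and φ° : F → E be crossed linear maps. Then there exists a unique linear map ψ : F → E satisfying the four equalities φ∘ψ∘φ = φ, ψ∘φ∘ψ = ψ, φ°∘φ∘ψ = φ°, and ψ∘φ∘φ° = φ°. Moreover this ψ satisfies: φ∘ψ is the projection of F onto range φ along ker φ° (it is idempotent with range equal to range φ and kernel equal to ker φ°), and ψ∘φ is the projection of E onto range φ° along ker φ. (ψ is called the generalized inverse of φ via φ°, denoted Ig(φ,φ°).) -/
/-!
A map `ψ` satisfies the four equations exactly when it vanishes on `ker φ'` and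
`ψ ∘ φ ∘ φ' = φ'`, i.e. when it inverts `φ` on `range φ'`. Since `F = range φ ⊕ ker φ'` and
`φ` maps `range φ'` isomorphically onto `range φ` (as `E = ker φ ⊕ range φ'`), these conditions
determine `ψ`, and the inverse of that isomorphism extended by zero on `ker φ'` satisfies them.
Idempotence of `φ ∘ ψ` and `ψ ∘ φ`, `range (φ ∘ ψ) = range φ` and `ker (ψ ∘ φ) = ker φ` follow
from `φ ∘ ψ ∘ φ = φ` alone.
-/

namespace LinearMap

section Semiring

variable {R E F : Type*} [Semiring R] [AddCommMonoid E] [Module R E] [AddCommMonoid F] [Module R F]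

def IsGenInverseVia (φ : E →ₗ[R] F) (φ' : F →ₗ[R] E) (ψ : F →ₗ[R] E) : Prop :=
  φ ∘ₗ ψ ∘ₗ φ = φ ∧ ψ ∘ₗ φ ∘ₗ ψ = ψ ∧ φ' ∘ₗ φ ∘ₗ ψ = φ' ∧ ψ ∘ₗ φ ∘ₗ φ' = φ'

variable {φ : E →ₗ[R] F} {φ' : F →ₗ[R] E} {ψ ψ₁ ψ₂ : F →ₗ[R] E}

theorem isIdempotentElem_comp_of_comp_comp_eq (h : φ ∘ₗ ψ ∘ₗ φ = φ) :
    IsIdempotentElem (φ ∘ₗ ψ) :=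
  ext fun y => LinearMap.congr_fun h (ψ y)

theorem isIdempotentElem_comp_of_comp_comp_eq' (h : φ ∘ₗ ψ ∘ₗ φ = φ) :
    IsIdempotentElem (ψ ∘ₗ φ) :=
  ext fun x => congrArg ψ (LinearMap.congr_fun h x)

theorem range_comp_eq_of_comp_comp_eq (h : φ ∘ₗ ψ ∘ₗ φ = φ) : range (φ ∘ₗ ψ) = range φ :=
  le_antisymm (range_comp_le_range ψ φ) <|
    calc range φ = range ((φ ∘ₗ ψ) ∘ₗ φ) := by rw [comp_assoc, h]
      _ ≤ range (φ ∘ₗ ψ) := range_comp_le_range φ (φ ∘ₗ ψ)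

theorem ker_comp_eq_of_comp_comp_eq (h : φ ∘ₗ ψ ∘ₗ φ = φ) : ker (ψ ∘ₗ φ) = ker φ :=
  le_antisymm
    (calc ker (ψ ∘ₗ φ) ≤ ker (φ ∘ₗ ψ ∘ₗ φ) := ker_le_ker_comp (ψ ∘ₗ φ) φ
      _ = ker φ := by rw [h])
    (ker_le_ker_comp φ ψ)

theorem ker_comp_eq_of_comp_comp_eq_of_ker_le (h : φ' ∘ₗ φ ∘ₗ ψ = φ') (hker : ker φ' ≤ ker ψ) :
    ker (φ ∘ₗ ψ) = ker φ' :=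
  le_antisymm
    (calc ker (φ ∘ₗ ψ) ≤ ker (φ' ∘ₗ φ ∘ₗ ψ) := ker_le_ker_comp (φ ∘ₗ ψ) φ'
      _ = ker φ' := by rw [h])
    (hker.trans (ker_le_ker_comp ψ φ))

theorem range_comp_eq_of_comp_comp_eq_of_codisjoint (h : ψ ∘ₗ φ ∘ₗ φ' = φ')
    (hc : Codisjoint (ker φ) (range φ')) : range (ψ ∘ₗ φ) = range φ' := by
  refine le_antisymm ?_ ?_
  · rintro _ ⟨x, rfl⟩
    obtain ⟨a, _, ha, ⟨z, rfl⟩, rfl⟩ := Submodule.codisjoint_iff_exists_add_eq.mp hc x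
    refine ⟨z, ?_⟩
    rw [comp_apply, map_add, map_add, mem_ker.mp ha, map_zero, zero_add]
    exact (LinearMap.congr_fun h z).symm
  · calc range φ' = range ((ψ ∘ₗ φ) ∘ₗ φ') := by rw [comp_assoc, h]
      _ ≤ range (ψ ∘ₗ φ) := range_comp_le_range φ' (ψ ∘ₗ φ)

theorem IsGenInverseVia.ker_le_ker (hψ : IsGenInverseVia φ φ' ψ)
    (hd : Disjoint (range φ) (ker φ')) : ker φ' ≤ ker ψ := by
  intro y hy
  have hφψ : φ (ψ y) = 0 := by
    refine Submodule.disjoint_def.mp hd _ ⟨ψ y, rfl⟩ ?_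
    rw [mem_ker, ← mem_ker.mp hy]
    exact LinearMap.congr_fun hψ.2.2.1 y
  rw [mem_ker, ← LinearMap.congr_fun hψ.2.1 y]
  simp [hφψ]

theorem isGenInverseVia_of_ker_le_ker (h1 : Codisjoint (range φ) (ker φ'))
    (h2 : Codisjoint (ker φ) (range φ')) (hker : ker φ' ≤ ker ψ) (hφ' : ψ ∘ₗ φ ∘ₗ φ' = φ') :
    IsGenInverseVia φ φ' ψ := by
  have e1 : φ ∘ₗ ψ ∘ₗ φ = φ := by
    refine ext_on_codisjoint h2 (fun x hx => ?_) ?_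
    · simp [mem_ker.mp hx]
    · rintro _ ⟨z, rfl⟩
      exact congrArg φ (LinearMap.congr_fun hφ' z)
  refine ⟨e1, ext_on_codisjoint h1 ?_ (fun y hy => ?_),
    ext_on_codisjoint h1 ?_ (fun y hy => ?_), hφ'⟩
  · rintro _ ⟨x, rfl⟩
    exact congrArg ψ (LinearMap.congr_fun e1 x)
  · simp [mem_ker.mp (hker hy)]
  · rintro _ ⟨x, rfl⟩
    exact congrArg φ' (LinearMap.congr_fun e1 x)
  · simp [mem_ker.mp (hker hy), mem_ker.mp hy]

theorem IsGenInverseVia.unique (h1 : IsCompl (range φ) (ker φ'))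
    (h2 : Codisjoint (ker φ) (range φ'))
    (hψ₁ : IsGenInverseVia φ φ' ψ₁) (hψ₂ : IsGenInverseVia φ φ' ψ₂) : ψ₁ = ψ₂ := by
  have hker₁ := hψ₁.ker_le_ker h1.disjoint
  have hker₂ := hψ₂.ker_le_ker h1.disjoint
  have hφ : ψ₁ ∘ₗ φ = ψ₂ ∘ₗ φ := by
    refine ext_on_codisjoint h2 (fun x hx => by simp [mem_ker.mp hx]) ?_
    rintro _ ⟨z, rfl⟩
    exact (LinearMap.congr_fun hψ₁.2.2.2 z).trans (LinearMap.congr_fun hψ₂.2.2.2 z).symm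
  refine ext_on_codisjoint h1.codisjoint ?_ (fun y hy => ?_)
  · rintro _ ⟨x, rfl⟩
    exact LinearMap.congr_fun hφ x
  · simp [mem_ker.mp (hker₁ hy), mem_ker.mp (hker₂ hy)]

end Semiring

section Ring

variable {R E F : Type*} [Ring R] [AddCommGroup E] [Module R E] [AddCommGroup F] [Module R F]
  {φ : E →ₗ[R] F} {φ' : F →ₗ[R] E}

theorem exists_isGenInverseVia (h1 : IsCompl (range φ) (ker φ'))
    (h2 : IsCompl (ker φ) (range φ')) : ∃ ψ, IsGenInverseVia φ φ' ψ := by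
  -- the inverse of `φ` restricted to `range φ'`, through `range φ ≃ E ⧸ ker φ ≃ range φ'`
  let ψ₀ : range φ →ₗ[R] E := (range φ').subtype ∘ₗ
    (Submodule.quotientEquivOfIsCompl _ _ h2).toLinearMap ∘ₗ φ.quotKerEquivRange.symm.toLinearMap
  refine ⟨ofIsCompl h1 ψ₀ 0, isGenInverseVia_of_ker_le_ker h1.codisjoint h2.codisjoint
    (fun y hy => ?_) (ext fun z => ?_)⟩
  · simpa using ofIsCompl_apply_right h1 (φ := ψ₀) (ψ := 0) ⟨y, hy⟩
  · refine (ofIsCompl_apply_left h1 (ψ := 0) ⟨φ (φ' z), mem_range_self φ _⟩).trans ?_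
    simp [ψ₀, quotKerEquivRange_symm_apply_image]

end Ring

end LinearMap

open LinearMap

theorem stmt6 {R : Type*} [CommRing R] {E F : Type*}
    [AddCommGroup E] [Module R E] [AddCommGroup F] [Module R F]
    (φ : E →ₗ[R] F) (φ' : F →ₗ[R] E)
    (h1 : IsCompl (LinearMap.range φ) (LinearMap.ker φ'))
    (h2 : IsCompl (LinearMap.ker φ) (LinearMap.range φ')) :
    (∃! ψ : F →ₗ[R] E,
      φ ∘ₗ ψ ∘ₗ φ = φ ∧ ψ ∘ₗ φ ∘ₗ ψ = ψ ∧ φ' ∘ₗ φ ∘ₗ ψ = φ' ∧ ψ ∘ₗ φ ∘ₗ φ' = φ') ∧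
    (∀ ψ : F →ₗ[R] E,
      (φ ∘ₗ ψ ∘ₗ φ = φ ∧ ψ ∘ₗ φ ∘ₗ ψ = ψ ∧ φ' ∘ₗ φ ∘ₗ ψ = φ' ∧ ψ ∘ₗ φ ∘ₗ φ' = φ') →
      ((φ ∘ₗ ψ) ∘ₗ (φ ∘ₗ ψ) = φ ∘ₗ ψ ∧
        LinearMap.range (φ ∘ₗ ψ) = LinearMap.range φ ∧
        LinearMap.ker (φ ∘ₗ ψ) = LinearMap.ker φ' ∧
        (ψ ∘ₗ φ) ∘ₗ (ψ ∘ₗ φ) = ψ ∘ₗ φ ∧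
        LinearMap.range (ψ ∘ₗ φ) = LinearMap.range φ' ∧
        LinearMap.ker (ψ ∘ₗ φ) = LinearMap.ker φ)) := by
  obtain ⟨ψ, hψ⟩ := exists_isGenInverseVia h1 h2
  refine ⟨⟨ψ, hψ, fun χ hχ => IsGenInverseVia.unique h1 h2.codisjoint hχ hψ⟩, fun χ hχ => ?_⟩
  have hker : ker φ' ≤ ker χ := IsGenInverseVia.ker_le_ker hχ h1.disjoint
  obtain ⟨hφχφ, -, hφ'φχ, hχφφ'⟩ := hχ
  exact ⟨(isIdempotentElem_comp_of_comp_comp_eq hφχφ).eq,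
    range_comp_eq_of_comp_comp_eq hφχφ,
    ker_comp_eq_of_comp_comp_eq_of_ker_le hφ'φχ hker,
    (isIdempotentElem_comp_of_comp_comp_eq' hφχφ).eq,
    range_comp_eq_of_comp_comp_eq_of_codisjoint hχφφ' h2.codisjoint,
    ker_comp_eq_of_comp_comp_eq hφχφ⟩
end

section
/- Let R be a commutative ring, E an R-module, and φ : E → E a linear map. Then range φ and ker φ are complementary submodules of E (i.e. φ is crossed with itself) if and only if there exists a linear map ψ : E → E satisfying φ∘ψ∘φ = φ, ψ∘φ∘ψ = ψ, and φ∘ψ = ψ∘φ. Moreover such a ψ (a 'group inverse' of φ) is unique when it exists. -/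
/-!
If `g` is a group inverse of `f`, then `f * g` is an idempotent with the same range and kernel
as `f`, so these are complementary. Conversely, if `E = range f ⊕ ker f`, then `f` restricts to
an automorphism of `range f` (via `range f ≃ E ⧸ ker f ≃ range f`); its inverse, extended by zero
on `ker f`, is a group inverse. Uniqueness is semigroup algebra: two group inverses `b`, `c` of
`a` give the same idempotent `a * b = a * c`, whence `b = b * (a * b) = a * c * c = c`.
-/

open LinearMap Submodule

def IsGroupInverse {S : Type*} [Mul S] (a b : S) : Prop :=
  a * b * a = a ∧ b * a * b = b ∧ Commute a b

namespace IsGroupInverse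

variable {S : Type*} [Semigroup S] {a b c : S}

theorem isIdempotentElem_mul (h : IsGroupInverse a b) : IsIdempotentElem (a * b) := by
  rw [IsIdempotentElem, ← mul_assoc, h.1]

theorem mul_eq_mul (hb : IsGroupInverse a b) (hc : IsGroupInverse a c) : a * b = a * c := by
  have haab : a * a * b = a := by rw [mul_assoc, hb.2.2.eq, ← mul_assoc, hb.1]
  calc a * b = a * c * a * b := by rw [hc.1]
    _ = c * (a * a * b) := by rw [hc.2.2.eq]; simp only [mul_assoc]
    _ = a * c := by rw [haab, hc.2.2.eq]

theorem unique (hb : IsGroupInverse a b) (hc : IsGroupInverse a c) : b = c :=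
  calc b = b * (a * b) := by rw [← mul_assoc, hb.2.1]
    _ = a * c * c := by rw [hb.mul_eq_mul hc, ← mul_assoc, ← hb.2.2.eq, hb.mul_eq_mul hc]
    _ = c := by rw [hc.2.2.eq, hc.2.1]

end IsGroupInverse

section

variable {R E F : Type*} [Ring R] [AddCommGroup E] [Module R E] [AddCommGroup F] [Module R F]

noncomputable def LinearMap.equivRangeOfIsComplKer (f : E →ₗ[R] F) {p : Submodule R E}
    (h : IsCompl p (ker f)) : p ≃ₗ[R] range f :=
  (quotientEquivOfIsCompl (ker f) p h.symm).symm ≪≫ₗ f.quotKerEquivRange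

theorem IsGroupInverse.isCompl_range_ker {f g : Module.End R E} (h : IsGroupInverse f g) :
    IsCompl (range f) (ker f) := by
  have hrange : range (f * g) = range f :=
    le_antisymm (range_comp_le_range g f) <| by
      conv_lhs => rw [← h.1]
      exact range_comp_le_range f (f * g)
  have hker : ker (f * g) = ker f := by
    rw [h.2.2.eq]
    refine le_antisymm ?_ (ker_le_ker_comp f g)
    conv_rhs => rw [← h.1, mul_assoc]
    exact ker_le_ker_comp (g * f) f
  simpa only [hrange, hker] using h.isIdempotentElem_mul.isCompl

theorem LinearMap.exists_isGroupInverse_of_isCompl {f : Module.End R E}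
    (h : IsCompl (range f) (ker f)) : ∃ g, IsGroupInverse f g := by
  set e := f.equivRangeOfIsComplKer h
  set g := ofIsCompl h ((range f).subtype ∘ₗ e.symm.toLinearMap) 0
  have hfg : ∀ u ∈ range f, f (g u) = u := fun u hu =>
    calc f (g u) = e (e.symm ⟨u, hu⟩) := congrArg f (ofIsCompl_apply_left h ⟨u, hu⟩)
      _ = u := by rw [e.apply_symm_apply]
  have hgf : ∀ u ∈ range f, g (f u) = u := fun u hu =>
    calc g (f u) = e.symm (e ⟨u, hu⟩) := ofIsCompl_apply_left h (e ⟨u, hu⟩)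
      _ = u := by rw [e.symm_apply_apply]
  have hg : ∀ k ∈ ker f, g k = 0 := fun k hk => ofIsCompl_apply_right h ⟨k, hk⟩
  refine ⟨g, ext_on_codisjoint h.codisjoint ?_ ?_, ext_on_codisjoint h.codisjoint ?_ ?_,
    ext_on_codisjoint h.codisjoint ?_ ?_⟩
  · exact fun u hu => congrArg f (hgf u hu)
  · intro k hk
    simp [mem_ker.mp hk]
  · exact fun u hu => congrArg g (hfg u hu)
  · intro k hk
    simp [hg k hk]
  · exact fun u hu => (hfg u hu).trans (hgf u hu).symm
  · intro k hk
    simp [hg k hk, mem_ker.mp hk]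

theorem LinearMap.isCompl_range_ker_iff_exists_isGroupInverse (f : Module.End R E) :
    IsCompl (range f) (ker f) ↔ ∃ g, IsGroupInverse f g :=
  ⟨exists_isGroupInverse_of_isCompl, fun ⟨_, hg⟩ => hg.isCompl_range_ker⟩

end

theorem stmt7 {R : Type*} [CommRing R] {E : Type*}
    [AddCommGroup E] [Module R E] (φ : E →ₗ[R] E) :
    (IsCompl (LinearMap.range φ) (LinearMap.ker φ) ↔
      ∃ ψ : E →ₗ[R] E, φ ∘ₗ ψ ∘ₗ φ = φ ∧ ψ ∘ₗ φ ∘ₗ ψ = ψ ∧ φ ∘ₗ ψ = ψ ∘ₗ φ) ∧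
    (∀ ψ₁ ψ₂ : E →ₗ[R] E,
      (φ ∘ₗ ψ₁ ∘ₗ φ = φ ∧ ψ₁ ∘ₗ φ ∘ₗ ψ₁ = ψ₁ ∧ φ ∘ₗ ψ₁ = ψ₁ ∘ₗ φ) →
      (φ ∘ₗ ψ₂ ∘ₗ φ = φ ∧ ψ₂ ∘ₗ φ ∘ₗ ψ₂ = ψ₂ ∧ φ ∘ₗ ψ₂ = ψ₂ ∘ₗ φ) →
      ψ₁ = ψ₂) :=
  ⟨φ.isCompl_range_ker_iff_exists_isGroupInverse, fun _ _ => IsGroupInverse.unique⟩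
end

section
/- Let R be a commutative ring, E a finitely generated R-module, and φ : E → E a linear map. The following are equivalent: (1) E is the internal direct sum of range φ and ker φ (they are complementary submodules); (2) E = range φ + ker φ; (3) range φ = range (φ∘φ). -/
/-!
If `range φ = range (φ ∘ φ)`, then every `x` can be written as `φ y + (x - φ y)` with
`φ (x - φ y) = 0`, and conversely applying `φ` to `E = range φ + ker φ` gives
`range φ = φ (range φ)`. For the missing disjointness, `range φ = range (φ ∘ φ)` says that `φ`
restricts to a surjective endomorphism of the finitely generated module `range φ`; over a
commutative ring such an endomorphism is injective (Vasconcelos), so `range φ ∩ ker φ = 0`.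
-/

namespace LinearMap

theorem range_sup_ker_eq_top_iff {R E : Type*} [Ring R] [AddCommGroup E] [Module R E]
    (φ : E →ₗ[R] E) : range φ ⊔ ker φ = ⊤ ↔ range φ = range (φ ∘ₗ φ) := by
  constructor
  · intro h
    calc range φ = (range φ ⊔ ker φ).map φ := by rw [h, Submodule.map_top]
      _ = range (φ ∘ₗ φ) := by
        rw [Submodule.map_sup, le_ker_iff_map.mp le_rfl, sup_bot_eq, range_comp]
  · intro h
    refine eq_top_iff.mpr fun x _ ↦ ?_
    obtain ⟨y, hy⟩ : φ x ∈ range (φ ∘ₗ φ) := h ▸ mem_range_self φ x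
    refine Submodule.mem_sup.mpr ⟨φ y, mem_range_self φ y, x - φ y, ?_, add_sub_cancel _ _⟩
    rw [mem_ker, map_sub, ← comp_apply, hy, sub_self]

theorem disjoint_range_ker_of_range_eq_range_comp {R E : Type*} [Semiring R] [OrzechProperty R]
    [AddCommMonoid E] [Module R E] [Module.Finite R E] {φ : E →ₗ[R] E}
    (h : range φ = range (φ ∘ₗ φ)) : Disjoint (range φ) (ker φ) := by
  let ψ : range φ →ₗ[R] range φ := φ.restrict fun x _ ↦ mem_range_self φ x
  have hψ : Function.Injective ψ := by
    refine OrzechProperty.injective_of_surjective_endomorphism ψ ?_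
    rintro ⟨_, hz⟩
    obtain ⟨y, rfl⟩ : _ ∈ range (φ ∘ₗ φ) := h ▸ hz
    exact ⟨⟨φ y, mem_range_self φ y⟩, rfl⟩
  refine Submodule.disjoint_def.mpr fun x hx hker ↦ ?_
  have hψx : ψ ⟨x, hx⟩ = ψ 0 := Subtype.ext (by simp [ψ, mem_ker.mp hker])
  exact congrArg Subtype.val (hψ hψx)

end LinearMap

theorem stmt8 {R : Type*} [CommRing R] {E : Type*}
    [AddCommGroup E] [Module R E] [Module.Finite R E] (φ : E →ₗ[R] E) :
    (IsCompl (LinearMap.range φ) (LinearMap.ker φ) ↔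
      LinearMap.range φ ⊔ LinearMap.ker φ = ⊤) ∧
    (LinearMap.range φ ⊔ LinearMap.ker φ = ⊤ ↔
      LinearMap.range φ = LinearMap.range (φ ∘ₗ φ)) := by
  have h23 := LinearMap.range_sup_ker_eq_top_iff φ
  refine ⟨⟨IsCompl.sup_eq_top, fun h ↦ ⟨?_, codisjoint_iff.mpr h⟩⟩, h23⟩
  exact LinearMap.disjoint_range_ker_of_range_eq_range_comp (h23.mp h)
end

section
/- Let R be a commutative ring, E and F finitely generated R-modules, and φ : E → F, φ° : F → E linear maps such that range φ° + ker φ = E and range φ + ker φ° = F. Then these sums are direct: range φ° and ker φ are complementary submodules of E, and range φ and ker φ° are complementary submodules of F (i.e. φ and φ° are crossed). -/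
open LinearMap

/-- If an endomorphism `g` of a finitely generated module satisfies
`range (g ∘ g) = range g`, then any element of `range g` killed by `g` is zero. -/
lemma aux_ker_range {R E : Type*} [CommRing R] [AddCommGroup E] [Module R E]
    [Module.Finite R E] (g : E →ₗ[R] E)
    (hr : LinearMap.range (g ∘ₗ g) = LinearMap.range g) :
    ∀ x ∈ LinearMap.range g, g x = 0 → x = 0 := by
  intro x hx hgx
  have hmap : ∀ y ∈ LinearMap.range g, g y ∈ LinearMap.range g :=
    fun y _ => LinearMap.mem_range_self g y
  let g' : LinearMap.range g →ₗ[R] LinearMap.range g := g.restrict hmap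
  have hsurj : Function.Surjective g' := by
    rintro ⟨y, hy⟩
    rw [← hr] at hy
    obtain ⟨z, hz⟩ := hy
    refine ⟨⟨g z, LinearMap.mem_range_self g z⟩, ?_⟩
    apply Subtype.ext
    simpa [g', LinearMap.restrict_apply] using hz
  have hinj : Function.Injective g' :=
    OrzechProperty.injective_of_surjective_endomorphism g' hsurj
  have : g' ⟨x, hx⟩ = g' 0 := by
    apply Subtype.ext
    simpa [g', LinearMap.restrict_apply] using hgx
  have := hinj this
  simpa using congrArg Subtype.val this

lemma key_range_comp {R A B : Type*} [CommRing R] [AddCommGroup A] [Module R A]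
    [AddCommGroup B] [Module R B] (f : A →ₗ[R] B) (f' : B →ₗ[R] A)
    (h : LinearMap.range f ⊔ LinearMap.ker f' = ⊤) :
    LinearMap.range (f' ∘ₗ f) = LinearMap.range f' := by
  have hker : Submodule.map f' (LinearMap.ker f') = ⊥ := by
    rw [eq_bot_iff]
    rintro y ⟨x, hx, rfl⟩
    simpa using hx
  have := congrArg (Submodule.map f') h
  rw [Submodule.map_sup, Submodule.map_top, hker, sup_bot_eq] at this
  rw [LinearMap.range_comp]
  exact this

theorem stmt9 {R : Type*} [CommRing R] {E F : Type*}
    [AddCommGroup E] [Module R E] [Module.Finite R E]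
    [AddCommGroup F] [Module R F] [Module.Finite R F]
    (φ : E →ₗ[R] F) (φ' : F →ₗ[R] E)
    (h1 : LinearMap.range φ' ⊔ LinearMap.ker φ = ⊤)
    (h2 : LinearMap.range φ ⊔ LinearMap.ker φ' = ⊤) :
    IsCompl (LinearMap.range φ') (LinearMap.ker φ) ∧
    IsCompl (LinearMap.range φ) (LinearMap.ker φ') := by
  have r1 : LinearMap.range (φ' ∘ₗ φ) = LinearMap.range φ' := key_range_comp φ φ' h2
  have r2 : LinearMap.range (φ ∘ₗ φ') = LinearMap.range φ := key_range_comp φ' φ h1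
  constructor
  · refine ⟨?_, by rw [codisjoint_iff]; exact h1⟩
    rw [disjoint_iff, eq_bot_iff]
    rintro x ⟨hx1, hx2⟩
    have hxr : x ∈ LinearMap.range (φ' ∘ₗ φ) := r1 ▸ hx1
    have hiter : LinearMap.range ((φ' ∘ₗ φ) ∘ₗ (φ' ∘ₗ φ)) = LinearMap.range (φ' ∘ₗ φ) := by
      rw [LinearMap.range_comp, r1, Submodule.map_comp, ← LinearMap.range_comp, r2,
        ← LinearMap.range_comp, r1]
    have : (φ' ∘ₗ φ) x = 0 := by
      simp [LinearMap.mem_ker.mp hx2]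
    exact aux_ker_range (φ' ∘ₗ φ) hiter x hxr this
  · refine ⟨?_, by rw [codisjoint_iff]; exact h2⟩
    rw [disjoint_iff, eq_bot_iff]
    rintro x ⟨hx1, hx2⟩
    have hxr : x ∈ LinearMap.range (φ ∘ₗ φ') := r2 ▸ hx1
    have hiter : LinearMap.range ((φ ∘ₗ φ') ∘ₗ (φ ∘ₗ φ')) = LinearMap.range (φ ∘ₗ φ') := by
      rw [LinearMap.range_comp, r2, Submodule.map_comp, ← LinearMap.range_comp, r1,
        ← LinearMap.range_comp, r2]
    have : (φ ∘ₗ φ') x = 0 := by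
      simp [LinearMap.mem_ker.mp hx2]
    exact aux_ker_range (φ ∘ₗ φ') hiter x hxr this
end

section
/- Let R be a commutative ring, A ∈ R^{m×n} and B ∈ R^{n×m}. For every k ≥ 1, the coefficient of Z^k in the polynomial det(I_n + Z·(B·A)) ∈ R[Z] equals Σ_{α,β} det(B_{β,α})·det(A_{α,β}), where the sum runs over all strictly increasing maps α : Fin k → Fin m and β : Fin k → Fin n, A_{α,β} is the k×k submatrix of A on rows α and columns β, and B_{β,α} is the k×k submatrix of B on rows β and columns α. -/
/-!
Expanding `det (1 + X • N)` multilinearly in its rows shows that its `k`-th coefficient is the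
sum of the `k × k` principal minors of `N`. For `N = B * A` each principal minor
`det (B_{β,·} * A_{·,β})` is expanded by the Cauchy–Binet formula, which comes from the same
multilinear expansion of `det (M * N)`: terms indexed by non-injective row selections vanish, and
sorting each injective selection into a strictly monotone one costs exactly the sign of the
sorting permutation.
-/

open Finset Matrix Polynomial
open scoped Classical

section Reindexing

variable {ι : Type*} [LinearOrder ι] [Fintype ι] {M : Type*} [AddCommMonoid M] {k : ℕ}

/-- Sorting: an injective tuple is, uniquely, a strictly monotone tuple composed with a
permutation. -/
theorem sum_injective_eq_sum_strictMono_sum_perm (g : (Fin k → ι) → M) :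
    ∑ f ∈ univ.filter (fun f : Fin k → ι => Function.Injective f), g f =
      ∑ α ∈ univ.filter (fun α : Fin k → ι => StrictMono α),
        ∑ σ : Equiv.Perm (Fin k), g (α ∘ σ) := by
  rw [← sum_product']
  symm
  refine sum_bij (fun p _ => p.1 ∘ p.2) ?_ ?_ ?_ (fun _ _ => rfl)
  · intro p hp
    simp only [mem_product, mem_filter, mem_univ, true_and, and_true] at hp ⊢
    exact hp.injective.comp p.2.injective
  · rintro ⟨α, σ⟩ hp ⟨α', σ'⟩ hp' h
    simp only [mem_product, mem_filter, mem_univ, true_and, and_true] at hp hp' h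
    have hα : α = α' := by
      rw [← hp.range_inj hp', ← σ.surjective.range_comp, h, σ'.surjective.range_comp]
    subst hα
    exact Prod.ext rfl (Equiv.ext fun i => hp.injective (congrFun h i))
  · intro f hf
    simp only [mem_filter, mem_univ, true_and] at hf
    refine ⟨(f ∘ Tuple.sort f, (Tuple.sort f)⁻¹), ?_, ?_⟩
    · simp only [mem_product, mem_filter, mem_univ, true_and, and_true]
      exact (Tuple.monotone_sort f).strictMono_of_injective (hf.comp (Tuple.sort f).injective)
    · funext i
      simp

theorem sum_powersetCard_eq_sum_strictMono (g : Finset ι → M) :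
    ∑ s ∈ powersetCard k univ, g s =
      ∑ β ∈ univ.filter (fun β : Fin k → ι => StrictMono β), g (univ.image β) := by
  symm
  refine sum_bij (fun β _ => univ.image β) ?_ ?_ ?_ (fun _ _ => rfl)
  · intro β hβ
    simp only [mem_filter, mem_univ, true_and] at hβ
    rw [mem_powersetCard, card_image_of_injective _ hβ.injective]
    simp
  · intro β hβ β' hβ' h
    simp only [mem_filter, mem_univ, true_and] at hβ hβ'
    rw [← hβ.range_inj hβ']
    simpa [coe_image] using congrArg (fun s : Finset ι => (s : Set ι)) h
  · intro s hs
    rw [mem_powersetCard] at hs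
    refine ⟨s.orderEmbOfFin hs.2, by simpa using (s.orderEmbOfFin hs.2).strictMono, ?_⟩
    rw [← Finset.coe_inj, coe_image, coe_univ, Set.image_univ, range_orderEmbOfFin]

end Reindexing

section Minors

variable {R : Type*} [CommRing R] {ι : Type*} {k : ℕ}

theorem Matrix.det_submatrix_image [DecidableEq ι] {β : Fin k → ι} (hβ : Function.Injective β)
    (N : Matrix ι ι R) :
    det (N.submatrix (Subtype.val : univ.image β → ι) Subtype.val) = det (N.submatrix β β) := by
  let e : Fin k ≃ univ.image β :=
    Equiv.ofBijective (fun i => ⟨β i, mem_image_of_mem β (mem_univ i)⟩)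
      ⟨fun i j h => hβ (congrArg Subtype.val h), fun ⟨x, hx⟩ => by simpa using hx⟩
  rw [← det_submatrix_equiv_self e]
  rfl

variable [Fintype ι]

theorem Matrix.det_mul_eq_sum_mul_det_submatrix (M : Matrix (Fin k) ι R)
    (N : Matrix ι (Fin k) R) :
    det (M * N) = ∑ f : Fin k → ι, (∏ i, M i (f i)) * det (N.submatrix f id) := by
  have hrows : (M * N) = fun i => ∑ j, M i j • N j := by
    ext i l
    simp [mul_apply]
  calc det (M * N) = detRowAlternating (fun i => ∑ j, M i j • N j) := by rw [hrows]; rfl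
    _ = ∑ f : Fin k → ι, detRowAlternating (fun i => M i (f i) • N (f i)) :=
      MultilinearMap.map_sum _ _
    _ = _ := by
      refine sum_congr rfl fun f _ => ?_
      rw [AlternatingMap.map_smul_univ]
      rfl

variable [LinearOrder ι]

/-- **Cauchy–Binet formula.** -/
theorem Matrix.det_mul_eq_sum_strictMono (M : Matrix (Fin k) ι R) (N : Matrix ι (Fin k) R) :
    det (M * N) = ∑ α ∈ univ.filter (fun α : Fin k → ι => StrictMono α),
      det (M.submatrix id α) * det (N.submatrix α id) := by
  have hnoninj : ∀ f ∈ univ.filter (fun f : Fin k → ι => ¬ Function.Injective f),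
      (∏ i, M i (f i)) * det (N.submatrix f id) = 0 := by
    intro f hf
    obtain ⟨i, j, hij, hne⟩ := Function.not_injective_iff.mp (mem_filter.mp hf).2
    rw [det_zero_of_row_eq hne (by ext; simp [hij]), mul_zero]
  rw [det_mul_eq_sum_mul_det_submatrix, ← sum_filter_add_sum_filter_not univ Function.Injective,
    sum_eq_zero hnoninj, add_zero, sum_injective_eq_sum_strictMono_sum_perm]
  refine sum_congr rfl fun α _ => ?_
  have hperm : ∀ σ : Equiv.Perm (Fin k),
      det (N.submatrix (α ∘ σ) id) = Equiv.Perm.sign σ * det (N.submatrix α id) := fun σ =>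
    det_permute σ (N.submatrix α id)
  simp_rw [hperm, ← det_transpose (M.submatrix id α), det_apply', sum_mul]
  refine sum_congr rfl fun σ _ => ?_
  simp only [transpose_apply, submatrix_apply, id_eq, Function.comp_apply]
  ring

theorem Matrix.coeff_det_one_add_X_smul_eq_sum_strictMono (N : Matrix ι ι R) :
    (det (1 + (X : R[X]) • N.map C)).coeff k =
      ∑ β ∈ univ.filter (fun β : Fin k → ι => StrictMono β), det (N.submatrix β β) := by
  rw [coeff_det_one_add_X_smul_eq_sum_minors, sum_powersetCard_eq_sum_strictMono]
  refine sum_congr rfl fun β hβ => ?_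
  exact det_submatrix_image (mem_filter.mp hβ).2.injective N

end Minors

theorem stmt10_general {R : Type*} [CommRing R] {m n k : ℕ}
    (A : Matrix (Fin m) (Fin n) R) (B : Matrix (Fin n) (Fin m) R) :
    (((1 : Matrix (Fin n) (Fin n) R[X]) + (X : R[X]) • (B * A).map C).det).coeff k =
      ∑ α ∈ Finset.univ.filter (fun α : Fin k → Fin m => StrictMono α),
        ∑ β ∈ Finset.univ.filter (fun β : Fin k → Fin n => StrictMono β),
          (B.submatrix β α).det * (A.submatrix α β).det := by
  rw [coeff_det_one_add_X_smul_eq_sum_strictMono, sum_comm]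
  refine sum_congr rfl fun β _ => ?_
  rw [submatrix_mul B A β id β Function.bijective_id, det_mul_eq_sum_strictMono]
  rfl

/-- Binet–Cauchy formula for the coefficients of `det(I + Z·(B·A))`. -/
theorem stmt10 {R : Type*} [CommRing R] {m n k : ℕ} (hk : 1 ≤ k)
    (A : Matrix (Fin m) (Fin n) R) (B : Matrix (Fin n) (Fin m) R) :
    (((1 : Matrix (Fin n) (Fin n) R[X]) + (X : R[X]) • (B * A).map C).det).coeff k =
      ∑ α ∈ Finset.univ.filter (fun α : Fin k → Fin m => StrictMono α),
        ∑ β ∈ Finset.univ.filter (fun β : Fin k → Fin n => StrictMono β),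
          (B.submatrix β α).det * (A.submatrix α β).det :=
  stmt10_general A B
end

section
/- Let R be a commutative ring, A, H ∈ R^{n×n}, and let d_j ∈ R denote the coefficient of X^j in det(I_n + X·A) ∈ R[X], with d_0 = 1. Then for every k ≥ 1, the coefficient of ε¹·X^k in det(I_n + X·(A + ε·H)) ∈ R[ε][X] equals trace((d_{k−1}·I_n − d_{k−2}·A + d_{k−3}·A² − ⋯ + (−1)^{k−1}·A^{k−1})·H); equivalently, the gradient of the polynomial function A ↦ d_k(A) at A is Σ_{i=0}^{k−1} (−1)^i d_{k−1−i} A^i. -/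
open Matrix Polynomial

/-- `d j A` is the coefficient of `X^j` in `det(I + X·A)`. -/
noncomputable def dCoeff {R : Type*} [CommRing R] {n : ℕ}
    (A : Matrix (Fin n) (Fin n) R) (j : ℕ) : R :=
  (((1 : Matrix (Fin n) (Fin n) R[X]) + (X : R[X]) • A.map C).det).coeff j

/-!
Swapping the two variables turns the `ε`-linear part of `det (1 + X • (A + ε • H))` into the
`ε`-linear part of `det (B + ε • X • H)` with `B = 1 + X • A`, which by multilinearity of the
determinant in the rows is Jacobi's `trace (adjugate B * X • H)`. Comparing coefficients of `X ^ m`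
in `B * adjugate B = det B • 1` gives `Q₀ = d₀ • 1` and `Q_{m+1} = d_{m+1} • 1 - A * Q_m` for the
coefficients `Q_m` of `adjugate B`, a recursion solved by `∑ i ≤ m, (-1) ^ i * d_{m-i} • A ^ i`.
-/

open Finset
open scoped Polynomial.Bivariate

namespace Matrix

variable {n S : Type*} [Fintype n] [DecidableEq n] [CommRing S]

theorem trace_adjugate_mul (M N : Matrix n n S) :
    trace (adjugate M * N) = ∑ i, (M.updateRow i (N i)).det := by
  calc trace (adjugate M * N) = trace (adjugate Mᵀ * Nᵀ) := by
        rw [← adjugate_transpose, ← transpose_mul, trace_transpose, trace_mul_comm]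
    _ = ∑ i, cramer Mᵀ (N i) i := by
        simp [trace, cramer_eq_adjugate_mulVec, mul_apply, mulVec, dotProduct]
    _ = ∑ i, (M.updateRow i (N i)).det := by
        simp [cramer_transpose_apply]

theorem det_map_C_add_X_smul (M N : Matrix n n S) :
    det (M.map C + (X : S[X]) • N.map C) =
      ∑ s : Finset n, X ^ #s * C (of (s.piecewise N M)).det := by
  rw [add_comm]
  change (detRowAlternating : (n → S[X]) [⋀^n]→ₗ[S[X]] S[X]).toMultilinearMap
    ((fun i => (X : S[X]) • N.map C i) + fun i => M.map C i) = _
  rw [MultilinearMap.map_add_univ]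
  refine sum_congr rfl fun s _ => ?_
  let P : n → n → S[X] := fun i j => C (s.piecewise N M i j)
  have hsmul : s.piecewise (fun i => (X : S[X]) • N.map C i) (fun i => M.map C i) =
      s.piecewise (fun i => (X : S[X]) • P i) P := by
    funext i j; by_cases hi : i ∈ s <;> simp [Finset.piecewise, hi, P]
  rw [hsmul, MultilinearMap.map_piecewise_smul, prod_const, smul_eq_mul, RingHom.map_det]
  rfl

theorem coeff_one_det_map_C_add_X_smul (M N : Matrix n n S) :
    (det (M.map C + (X : S[X]) • N.map C)).coeff 1 = trace (adjugate M * N) := by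
  simp only [det_map_C_add_X_smul, finsetSum_coeff, X_pow_mul, coeff_C_mul_X_pow]
  rw [← sum_filter, trace_adjugate_mul]
  have hsingletons : ({s | 1 = #s} : Finset (Finset n)) = powersetCard 1 univ := by
    ext s; simp [eq_comm]
  rw [hsingletons, powersetCard_one, sum_map]
  refine sum_congr rfl fun i _ => ?_
  congr 1
  ext j k
  by_cases hj : j = i <;> simp [Finset.piecewise, updateRow_apply, hj]

theorem coeff_trace_mul_map_C (P : Matrix n n S[X]) (H : Matrix n n S) (m : ℕ) :
    (trace (P * H.map C)).coeff m = trace ((matPolyEquiv P).coeff m * H) := by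
  simp [trace, mul_apply, finsetSum_coeff]

end Matrix

theorem Polynomial.Bivariate.coeff_coeff_swap {R : Type*} [CommSemiring R] (p : R[X][Y])
    (i j : ℕ) : ((swap p).coeff i).coeff j = (p.coeff j).coeff i := by
  induction p using Polynomial.induction_on' with
  | add p q hp hq => simp [hp, hq]
  | monomial m f =>
    rw [swap_monomial, coeff_mul_C, coeff_map, coeff_C_mul_X_pow, coeff_monomial]
    simp only [eq_comm (a := j), apply_ite (coeff · i), coeff_zero]

section
variable {R : Type*} [CommRing R] {n : ℕ} (A : Matrix (Fin n) (Fin n) R)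

noncomputable def adjCoeff (m : ℕ) : Matrix (Fin n) (Fin n) R :=
  ∑ i ∈ range (m + 1), ((-1 : R) ^ i * dCoeff A (m - i)) • A ^ i

lemma adjCoeff_succ (m : ℕ) :
    adjCoeff A (m + 1) = dCoeff A (m + 1) • 1 - A * adjCoeff A m := by
  rw [adjCoeff, sum_range_succ', adjCoeff, mul_sum, sub_eq_add_neg, ← sum_neg_distrib, add_comm]
  refine congrArg₂ (· + ·) (by simp) (sum_congr rfl fun i _ => ?_)
  rw [Matrix.mul_smul, ← pow_succ', ← neg_smul, Nat.add_sub_add_right, pow_succ, mul_neg_one,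
    neg_mul]

lemma coeff_matPolyEquiv_adjugate_one_add_X_smul (m : ℕ) :
    (matPolyEquiv (adjugate (1 + (X : R[X]) • A.map C))).coeff m = adjCoeff A m := by
  set P := matPolyEquiv (adjugate (1 + (X : R[X]) • A.map C))
  have hP : (1 + C A * X) * P = (det (1 + (X : R[X]) • A.map C)).map (algebraMap R _) := by
    rw [← matPolyEquiv_smul_one, ← mul_adjugate, map_mul]
    simp [P]
  have hcoeff (k : ℕ) : ((1 + C A * X) * P).coeff k = dCoeff A k • 1 := by
    rw [hP, coeff_map, Algebra.algebraMap_eq_smul_one]; rfl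
  induction m with
  | zero => simpa [adjCoeff] using hcoeff 0
  | succ m ih =>
    rw [adjCoeff_succ, ← ih, ← hcoeff, add_mul, one_mul, mul_assoc, coeff_add, coeff_C_mul,
      coeff_X_mul]
    abel

end

theorem stmt11_general {R : Type*} [CommRing R] {n : ℕ} (k : ℕ)
    (A H : Matrix (Fin n) (Fin n) R) :
    ((((1 : Matrix (Fin n) (Fin n) (Polynomial (Polynomial R))) +
        (X : Polynomial (Polynomial R)) •
          (A.map (fun a => C (C a)) +
            (C (X : Polynomial R)) • H.map (fun a => C (C a)))).det).coeff k).coeff 1 =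
      ((∑ i ∈ Finset.range k, ((-1 : R) ^ i * dCoeff A (k - 1 - i)) • A ^ i) * H).trace := by
  rw [← Bivariate.coeff_coeff_swap, AlgEquiv.map_det]
  have hswap : Bivariate.swap.mapMatrix ((1 : Matrix (Fin n) (Fin n) R[X][Y]) +
        (X : R[X][Y]) • (A.map (fun a => C (C a)) + C (X : R[X]) • H.map (fun a => C (C a)))) =
      (1 + (X : R[X]) • A.map C).map C + (X : R[X][Y]) • ((X : R[X]) • H.map C).map C := by
    refine Matrix.ext fun i j => ?_
    simp only [AlgEquiv.mapMatrix_apply, map_apply, Matrix.add_apply, Matrix.one_apply,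
      Matrix.smul_apply, smul_eq_mul, map_add, map_mul, MonoidWithZeroHom.map_ite_one_zero,
      Bivariate.swap_C_C, Bivariate.swap_Y, Bivariate.swap_X]
    ring
  rw [hswap, coeff_one_det_map_C_add_X_smul, Matrix.mul_smul, trace_smul, smul_eq_mul]
  rcases k with _ | m
  · simp
  rw [coeff_X_mul, coeff_trace_mul_map_C, coeff_matPolyEquiv_adjugate_one_add_X_smul, adjCoeff]
  simp only [Nat.add_sub_cancel]

/-- The gradient of `A ↦ d_k(A)` is `Σ_{i=0}^{k-1} (-1)^i d_{k-1-i} A^i`: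
the coefficient of `ε·X^k` in `det(I + X·(A + ε·H))` equals
`trace((d_{k-1}·I − d_{k-2}·A + ⋯ + (−1)^{k−1}·A^{k−1})·H)`. -/
theorem stmt11 {R : Type*} [CommRing R] {n : ℕ} (k : ℕ) (hk : 1 ≤ k)
    (A H : Matrix (Fin n) (Fin n) R) :
    ((((1 : Matrix (Fin n) (Fin n) (Polynomial (Polynomial R))) +
        (X : Polynomial (Polynomial R)) •
          (A.map (fun a => C (C a)) +
            (C (X : Polynomial R)) • H.map (fun a => C (C a)))).det).coeff k).coeff 1 =
      ((∑ i ∈ Finset.range k, ((-1 : R) ^ i * dCoeff A (k - 1 - i)) • A ^ i) * H).trace :=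
  stmt11_general k A H
end

section
/- Let R be a commutative ring, A ∈ R^{m×n}, A° ∈ R^{n×m}, and let a_j denote the coefficient of Z^j in det(I_m + Z·(A·A°)). Then for every k ≥ 1 one has the identity of n×m matrices: a_{k−1}·A° − a_{k−2}·A°·A·A° + ⋯ + (−1)^{k−1}·(A°·A)^{k−1}·A° = Σ_{α,β} det(A°_{β,α}) · Adj_{α,β}(A), where the sum runs over all strictly increasing α : Fin k → Fin m and β : Fin k → Fin n. -/
/-!
Both sides are the derivative of `a_k`, as a function of `A`, in an arbitrary direction `E`,
paired with `E` through the trace; since a matrix `L` is determined by the traces `tr (L * E)`,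
it suffices to compare these. The derivatives are computed over the dual numbers `R[ε]` with
Jacobi's formula `det (M + ε N) = det M + ε tr (adj M * N)`.
Differentiating `det (1 + Z (A + εE) A°)` directly and using the expansion
`adj (1 + Z B) = ∑ⱼ Zʲ ∑_{i ≤ j} (-1)ⁱ a_{j-i} Bⁱ` gives the left-hand side; expanding
`a_k = ∑_{α,β} det A_{α,β} det A°_{β,α}` first (principal minors and Cauchy–Binet) and
differentiating each minor gives the right-hand side.
-/

open Matrix Polynomial
open scoped Classical

/-- `aCoeff A A' j` is the coefficient of `Z^j` in `det(I_m + Z·(A·A'))`. -/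
noncomputable def aCoeff {R : Type*} [CommRing R] {m n : ℕ}
    (A : Matrix (Fin m) (Fin n) R) (A' : Matrix (Fin n) (Fin m) R) (j : ℕ) : R :=
  (((1 : Matrix (Fin m) (Fin m) R[X]) + (X : R[X]) • (A * A').map C).det).coeff j

namespace Finset

theorem sum_pow_card_mul_of_mul_self_eq_zero {ι S : Type*} [Fintype ι] [DecidableEq ι]
    [Semiring S] {η : S} (hη : η * η = 0) (g : Finset ι → S) :
    ∑ s : Finset ι, η ^ s.card * g s = g ∅ + η * ∑ i, g {i} := by
  have hsmall : ∀ s ∈ (univ : Finset (Finset ι)),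
      s ∉ insert ∅ (univ.map ⟨singleton, singleton_injective⟩) →
        η ^ s.card * g s = 0 := by
    intro s _ hs
    simp only [mem_insert, mem_map, mem_univ, true_and, Function.Embedding.coeFn_mk, not_or,
      not_exists] at hs
    have htwo : 1 < s.card := one_lt_card_iff_nontrivial.mpr
      ((nonempty_iff_ne_empty.mpr hs.1).exists_eq_singleton_or_nontrivial.resolve_left
        fun ⟨i, hi⟩ => hs.2 i hi.symm)
    rw [pow_eq_zero_of_le htwo (by rwa [sq]), zero_mul]
  rw [← sum_subset (subset_univ _) hsmall, sum_insert (by simp), sum_map, mul_sum]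
  simp

variable {k : ℕ} {α T : Type*} [LinearOrder α] [Fintype α] [AddCommMonoid T]

theorem sum_injective_eq_sum_strictMono_sum_perm (G : (Fin k → α) → T) :
    ∑ p ∈ univ.filter (fun p : Fin k → α => p.Injective), G p =
      ∑ β ∈ univ.filter (fun β : Fin k → α => StrictMono β),
        ∑ τ : Equiv.Perm (Fin k), G (β ∘ τ) := by
  rw [← sum_product',
    ← sum_image (g := fun x : (Fin k → α) × Equiv.Perm (Fin k) => x.1 ∘ x.2)]
  · congr 1
    ext p
    simp only [mem_image, mem_product, mem_filter, mem_univ, true_and, and_true, Prod.exists]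
    constructor
    · intro hp
      -- `Tuple.sort p` reorders `p` increasingly
      refine ⟨p ∘ Tuple.sort p, (Tuple.sort p)⁻¹, ?_, by ext; simp⟩
      exact (Tuple.monotone_sort p).strictMono_of_injective (hp.comp (Equiv.injective _))
    · rintro ⟨β, τ, hβ, rfl⟩
      exact hβ.injective.comp τ.injective
  · rintro ⟨β, τ⟩ hβ ⟨β', τ'⟩ hβ' h
    replace hβ : StrictMono β := by simpa using hβ
    replace hβ' : StrictMono β' := by simpa using hβ'
    replace h : β ∘ τ = β' ∘ τ' := h
    obtain rfl : β = β' := by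
      rw [← hβ.range_inj hβ', ← EquivLike.range_comp β τ, h, EquivLike.range_comp]
    simp only [Prod.mk.injEq, true_and]
    ext i
    exact congrArg Fin.val (hβ.injective (congrFun h i))

theorem sum_powersetCard_univ_eq_sum_strictMono (F : Finset α → T) :
    ∑ s ∈ powersetCard k univ, F s =
      ∑ β ∈ univ.filter (fun β : Fin k → α => StrictMono β), F (univ.image β) := by
  rw [← sum_image (g := fun β : Fin k → α => univ.image β)]
  · congr 1
    ext s
    simp only [mem_powersetCard, subset_univ, true_and, mem_image, mem_filter, mem_univ]
    constructor
    · intro hs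
      refine ⟨s.orderEmbOfFin hs, (s.orderEmbOfFin hs).strictMono, ?_⟩
      rw [← coe_inj, coe_image, coe_univ, Set.image_univ, range_orderEmbOfFin]
    · rintro ⟨β, hβ, rfl⟩
      rw [card_image_of_injective _ hβ.injective, card_univ, Fintype.card_fin]
  · intro β hβ β' hβ' h
    replace hβ : StrictMono β := by simpa using hβ
    replace hβ' : StrictMono β' := by simpa using hβ'
    rw [← hβ.range_inj hβ', ← Set.image_univ, ← Set.image_univ, ← coe_univ, ← coe_image,
      ← coe_image]
    exact congrArg _ h

end Finset

namespace Matrix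

section FirstOrder

variable {ι R S : Type*} [Fintype ι] [DecidableEq ι] [CommRing R] [CommRing S]

theorem sum_det_updateRow_eq_trace_adjugate_mul (M N : Matrix ι ι S) :
    ∑ i, det (M.updateRow i (N i)) = trace (adjugate M * N) := by
  simp only [← cramer_transpose_apply, cramer_eq_adjugate_mulVec, ← adjugate_transpose, mulVec,
    dotProduct, trace, diag_apply, mul_apply, transpose_apply]
  rw [Finset.sum_comm]

theorem det_add_smul_of_mul_self_eq_zero {η : S} (hη : η * η = 0) (M N : Matrix ι ι S) :
    det (M + η • N) = det M + η * trace (adjugate M * N) := by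
  let D : (ι → S) [⋀^ι]→ₗ[S] S := detRowAlternating
  have hexpand :
      det (η • N + M) = ∑ s : Finset ι, η ^ s.card * D (s.piecewise N.row M.row) := by
    refine (D.map_add_univ (η • N).row M.row).trans (Finset.sum_congr rfl fun s _ => ?_)
    have hsmul : s.piecewise (η • N).row M.row =
        s.piecewise (fun i => η • s.piecewise N.row M.row i) (s.piecewise N.row M.row) := by
      funext i j
      by_cases hi : i ∈ s <;> simp [hi]
    rw [hsmul]
    exact (D.toMultilinearMap.map_piecewise_smul (fun _ => η) _ s).trans (by simp)
  rw [add_comm M, hexpand, Finset.sum_pow_card_mul_of_mul_self_eq_zero hη,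
    ← sum_det_updateRow_eq_trace_adjugate_mul]
  simp only [Finset.piecewise_empty, Finset.piecewise_singleton]
  rfl

theorem det_map_add_smul_map_of_mul_self_eq_zero (f : R →+* S) {η : S} (hη : η * η = 0)
    (M N : Matrix ι ι R) :
    det (M.map f + η • N.map f) = f (det M) + η * f (trace (adjugate M * N)) := by
  rw [det_add_smul_of_mul_self_eq_zero hη, RingHom.map_det, AddMonoidHom.map_trace,
    Matrix.map_mul, ← RingHom.mapMatrix_apply f M.adjugate, RingHom.map_adjugate]
  rfl

end FirstOrder

section CauchyBinet

variable {k : ℕ} {ι κ R : Type*} [LinearOrder ι] [Fintype ι] [LinearOrder κ] [Fintype κ]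
  [CommRing R]

theorem det_mul_eq_sum_strictMono_s12 (M : Matrix (Fin k) κ R) (N : Matrix κ (Fin k) R) :
    det (M * N) = ∑ β ∈ Finset.univ.filter (fun β : Fin k → κ => StrictMono β),
      det (M.submatrix id β) * det (N.submatrix β id) := by
  let D : (Fin k → R) [⋀^Fin k]→ₗ[R] R := detRowAlternating
  have hexpand :
      det (M * N) = ∑ p : Fin k → κ, (∏ i, M i (p i)) * det (N.submatrix p id) := by
    have hrows : (M * N).row = fun i => ∑ l, M i l • N.row l := by
      funext i j; simp [mul_apply]
    change D (M * N).row = _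
    rw [hrows]
    refine (D.map_sum fun i l => M i l • N.row l).trans (Finset.sum_congr rfl fun p _ => ?_)
    exact D.map_smul_univ (fun i => M i (p i)) (fun i => N.row (p i))
  have hnoninj : ∀ p : Fin k → κ, ¬ p.Injective → det (N.submatrix p id) = 0 := by
    intro p hp
    obtain ⟨i, j, hij, hne⟩ : ∃ i j, p i = p j ∧ i ≠ j := by
      simpa [Function.Injective] using hp
    exact det_zero_of_row_eq hne (by ext; simp [hij])
  have hperm : ∀ (β : Fin k → κ) (τ : Equiv.Perm (Fin k)),
      det (N.submatrix (β ∘ τ) id) = Equiv.Perm.sign τ * det (N.submatrix β id) := by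
    intro β τ
    rw [← det_permute, submatrix_submatrix]
    rfl
  rw [hexpand, ← Finset.sum_filter_of_ne fun p _ h =>
      by_contra fun hp => h (by rw [hnoninj p hp, mul_zero]),
    Finset.sum_injective_eq_sum_strictMono_sum_perm]
  refine Finset.sum_congr rfl fun β _ => ?_
  simp only [hperm, ← mul_assoc, ← Finset.sum_mul]
  congr 1
  rw [← det_transpose, det_apply]
  exact Finset.sum_congr rfl fun τ _ => by simp [Units.smul_def, mul_comm]

theorem coeff_det_one_add_X_smul_eq_sum_strictMono_s12 (P : Matrix ι ι R) (k : ℕ) :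
    (det (1 + (X : R[X]) • P.map C)).coeff k =
      ∑ α ∈ Finset.univ.filter (fun α : Fin k → ι => StrictMono α),
        det (P.submatrix α α) := by
  rw [coeff_det_one_add_X_smul_eq_sum_minors, Finset.sum_powersetCard_univ_eq_sum_strictMono]
  refine Finset.sum_congr rfl fun α hα => ?_
  replace hα : StrictMono α := by simpa using hα
  let e : Fin k ≃ (Finset.univ.image α : Finset ι) :=
    Equiv.ofBijective (fun i => ⟨α i, Finset.mem_image_of_mem α (Finset.mem_univ i)⟩)
      ⟨fun i j h => hα.injective (congrArg Subtype.val h), fun ⟨x, hx⟩ => by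
        obtain ⟨i, -, rfl⟩ := Finset.mem_image.mp hx; exact ⟨i, rfl⟩⟩
  rw [← det_submatrix_equiv_self e]
  rfl

theorem coeff_det_one_add_X_smul_mul_eq_sum_strictMono (M : Matrix ι κ R) (N : Matrix κ ι R)
    (k : ℕ) :
    (det (1 + (X : R[X]) • (M * N).map C)).coeff k =
      ∑ α ∈ Finset.univ.filter (fun α : Fin k → ι => StrictMono α),
        ∑ β ∈ Finset.univ.filter (fun β : Fin k → κ => StrictMono β),
          det (M.submatrix α β) * det (N.submatrix β α) := by
  rw [coeff_det_one_add_X_smul_eq_sum_strictMono_s12]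
  refine Finset.sum_congr rfl fun α _ => ?_
  rw [submatrix_mul M N α id α Function.bijective_id, det_mul_eq_sum_strictMono_s12]
  rfl

end CauchyBinet

theorem pow_mul_mul_eq_mul_mul_pow {m n R : Type*} [Fintype m] [Fintype n] [DecidableEq m]
    [DecidableEq n] [Semiring R] (M : Matrix m n R) (N : Matrix n m R) (t : ℕ) :
    (N * M) ^ t * N = N * (M * N) ^ t := by
  induction t with
  | zero => simp
  | succ t ih =>
    rw [pow_succ, Matrix.mul_assoc, Matrix.mul_assoc N M N, ← Matrix.mul_assoc _ N, ih,
      Matrix.mul_assoc, ← pow_succ]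

section Adjugate

variable {ι R : Type*} [Fintype ι] [CommRing R]

theorem coeff_trace_mul_map_C_s12 (Q : Matrix ι ι R[X]) (N : Matrix ι ι R) (i : ℕ) :
    (trace (Q * N.map C)).coeff i = trace (Q.map (coeff · i) * N) := by
  simp [trace, mul_apply, finsetSum_coeff]

variable [DecidableEq ι]

theorem map_coeff_succ_one_add_X_smul_mul (B : Matrix ι ι R) (Q : Matrix ι ι R[X]) (i : ℕ) :
    ((1 + (X : R[X]) • B.map C) * Q).map (coeff · (i + 1)) =
      Q.map (coeff · (i + 1)) + B * Q.map (coeff · i) := by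
  ext a b
  simp [add_mul, mul_apply, coeff_X_mul, coeff_C_mul]

theorem map_coeff_adjugate_one_add_X_smul (B : Matrix ι ι R) (i : ℕ) :
    (adjugate (1 + (X : R[X]) • B.map C)).map (coeff · i) =
      ∑ t ∈ Finset.range (i + 1),
        ((-1) ^ t * (det (1 + (X : R[X]) • B.map C)).coeff (i - t)) • B ^ t := by
  set M := 1 + (X : R[X]) • B.map C with hM
  clear_value M
  have heval : M.map (eval 0) = 1 := by
    ext a b; by_cases h : a = b <;> simp [hM, one_apply, h]
  have hdet : (det M).coeff 0 = 1 := by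
    rw [coeff_zero_eq_eval_zero, ← coe_evalRingHom, RingHom.map_det, RingHom.mapMatrix_apply,
      coe_evalRingHom, heval, det_one]
  induction i with
  | zero =>
    have : (adjugate M).map (coeff · 0) = adjugate (M.map (eval 0)) := by
      simp only [coeff_zero_eq_eval_zero]
      exact RingHom.map_adjugate (evalRingHom 0) M
    simp [this, heval, hdet]
  | succ i ih =>
    have hrec := congrArg (·.map (coeff · (i + 1))) (mul_adjugate M)
    rw [hM, map_coeff_succ_one_add_X_smul_mul, ← hM, ih] at hrec
    have hdiag : (det M • (1 : Matrix ι ι R[X])).map (coeff · (i + 1)) =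
        (det M).coeff (i + 1) • (1 : Matrix ι ι R) := by
      ext a b; by_cases h : a = b <;> simp [h]
    rw [eq_sub_of_add_eq hrec, hdiag, Finset.sum_range_succ' _ (i + 1), Finset.mul_sum,
      sub_eq_add_neg, ← Finset.sum_neg_distrib, add_comm]
    congr 1
    · refine Finset.sum_congr rfl fun t _ => ?_
      rw [mul_smul_comm, ← pow_succ', Nat.add_sub_add_right, ← neg_smul, pow_succ]
      ring_nf
    · simp

end Adjugate

section DualNumber

open DualNumber

variable {ι R : Type*} [Fintype ι] [DecidableEq ι] [CommRing R]

theorem snd_det_map_algebraMap_add_eps_smul (M N : Matrix ι ι R) :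
    (det (M.map (algebraMap R R[ε]) + (ε : R[ε]) • N.map (algebraMap R R[ε]))).snd =
      trace (adjugate M * N) := by
  rw [det_map_add_smul_map_of_mul_self_eq_zero _ eps_mul_eps]
  simp [TrivSqZeroExt.algebraMap_eq_inl]

theorem snd_coeff_det_one_add_X_smul_map_algebraMap_add_eps (B D : Matrix ι ι R) (i : ℕ) :
    ((det (1 + (X : R[ε][X]) •
        (B.map (algebraMap R R[ε]) + (ε : R[ε]) • D.map (algebraMap R R[ε])).map C)).coeff
          (i + 1)).snd =
      trace ((adjugate (1 + (X : R[X]) • B.map C)).map (coeff · i) * D) := by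
  let φ : R[X] →+* R[ε][X] := mapRingHom (algebraMap R R[ε])
  have hsplit : 1 + (X : R[ε][X]) •
        (B.map (algebraMap R R[ε]) + (ε : R[ε]) • D.map (algebraMap R R[ε])).map C =
      (1 + (X : R[X]) • B.map C).map φ + C (ε : R[ε]) • ((X : R[X]) • D.map C).map φ := by
    refine Matrix.ext fun a b => ?_
    by_cases h : a = b <;> simp [φ, h]
    all_goals ring
  have hη : C (ε : R[ε]) * C ε = 0 := by rw [← C_mul, eps_mul_eps, C_0]
  rw [hsplit, det_map_add_smul_map_of_mul_self_eq_zero (S := R[ε][X]) φ hη, coeff_add,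
    coeff_C_mul]
  simp [φ, TrivSqZeroExt.algebraMap_eq_inl, trace_smul, coeff_X_mul,
    coeff_trace_mul_map_C_s12]

end DualNumber

end Matrix

section DirectionalDerivative

open DualNumber

variable {R : Type*} [CommRing R] {m n : ℕ}

theorem sum_aCoeff_smul_pow_mul_eq_mul_map_coeff_adjugate (A : Matrix (Fin m) (Fin n) R)
    (A' : Matrix (Fin n) (Fin m) R) (j : ℕ) :
    ∑ i ∈ Finset.range (j + 1),
        ((-1 : R) ^ i * aCoeff A A' (j + 1 - 1 - i)) • ((A' * A) ^ i * A') =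
      A' * (adjugate (1 + (X : R[X]) • (A * A').map C)).map (coeff · j) := by
  rw [map_coeff_adjugate_one_add_X_smul, Matrix.mul_sum]
  refine Finset.sum_congr rfl fun i _ => ?_
  rw [pow_mul_mul_eq_mul_mul_pow, Matrix.mul_smul, Nat.add_sub_cancel]
  rfl

theorem trace_adjSub_mul {k : ℕ} (A : Matrix (Fin m) (Fin n) R) (α : Fin k → Fin m)
    (β : Fin k → Fin n) (E : Matrix (Fin m) (Fin n) R) :
    trace (adjSub A α β * E) = trace (adjugate (A.submatrix α β) * E.submatrix α β) := by
  have hEsub : (1 : Matrix (Fin m) (Fin m) R).submatrix α id * E *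
      (1 : Matrix (Fin n) (Fin n) R).submatrix id β = E.submatrix α β := by
    ext a b
    simp [mul_apply, one_apply]
  rw [adjSub, Matrix.mul_assoc _ _ E, trace_mul_comm, ← Matrix.mul_assoc, hEsub, trace_mul_comm]

theorem trace_sum_aCoeff_smul_pow_mul_mul_eq_snd_aCoeff (A E : Matrix (Fin m) (Fin n) R)
    (A' : Matrix (Fin n) (Fin m) R) (j : ℕ) :
    trace ((∑ i ∈ Finset.range (j + 1),
        ((-1 : R) ^ i * aCoeff A A' (j + 1 - 1 - i)) • ((A' * A) ^ i * A')) * E) =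
      (aCoeff (A.map (algebraMap R R[ε]) + (ε : R[ε]) • E.map (algebraMap R R[ε]))
        (A'.map (algebraMap R R[ε])) (j + 1)).snd := by
  rw [aCoeff, Matrix.add_mul, Matrix.smul_mul, ← Matrix.map_mul, ← Matrix.map_mul,
    snd_coeff_det_one_add_X_smul_map_algebraMap_add_eps,
    sum_aCoeff_smul_pow_mul_eq_mul_map_coeff_adjugate, trace_mul_cycle, trace_mul_comm]

theorem snd_aCoeff_eq_trace_sum_smul_adjSub_mul (A E : Matrix (Fin m) (Fin n) R)
    (A' : Matrix (Fin n) (Fin m) R) (k : ℕ) :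
    (aCoeff (A.map (algebraMap R R[ε]) + (ε : R[ε]) • E.map (algebraMap R R[ε]))
        (A'.map (algebraMap R R[ε])) k).snd =
      trace ((∑ α ∈ Finset.univ.filter (fun α : Fin k → Fin m => StrictMono α),
        ∑ β ∈ Finset.univ.filter (fun β : Fin k → Fin n => StrictMono β),
          (A'.submatrix β α).det • adjSub A α β) * E) := by
  simp only [aCoeff, coeff_det_one_add_X_smul_mul_eq_sum_strictMono, TrivSqZeroExt.snd_sum,
    Matrix.sum_mul, trace_sum, Matrix.smul_mul, trace_smul, smul_eq_mul]
  refine Finset.sum_congr rfl fun α _ => Finset.sum_congr rfl fun β _ => ?_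
  have hsub :
      (A.map (algebraMap R R[ε]) + (ε : R[ε]) • E.map (algebraMap R R[ε])).submatrix α β =
      (A.submatrix α β).map (algebraMap R R[ε]) +
        (ε : R[ε]) • (E.submatrix α β).map (algebraMap R R[ε]) := rfl
  rw [trace_adjSub_mul, hsub, submatrix_map, DualNumber.snd_mul,
    snd_det_map_algebraMap_add_eps_smul, ← RingHom.mapMatrix_apply _ (A'.submatrix β α),
    ← RingHom.map_det]
  simp [TrivSqZeroExt.algebraMap_eq_inl, mul_comm]

end DirectionalDerivative

theorem stmt12 {R : Type*} [CommRing R] {m n : ℕ} (k : ℕ) (hk : 1 ≤ k)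
    (A : Matrix (Fin m) (Fin n) R) (A' : Matrix (Fin n) (Fin m) R) :
    (∑ i ∈ Finset.range k,
        ((-1 : R) ^ i * aCoeff A A' (k - 1 - i)) • ((A' * A) ^ i * A')) =
      ∑ α ∈ Finset.univ.filter (fun α : Fin k → Fin m => StrictMono α),
        ∑ β ∈ Finset.univ.filter (fun β : Fin k → Fin n => StrictMono β),
          (A'.submatrix β α).det • adjSub A α β := by
  obtain ⟨j, rfl⟩ : ∃ j, k = j + 1 := ⟨k - 1, by omega⟩
  refine ext_iff_trace_mul_right.mpr fun E => ?_
  rw [trace_sum_aCoeff_smul_pow_mul_mul_eq_snd_aCoeff, snd_aCoeff_eq_trace_sum_smul_adjSub_mul]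
end

section
/- Let R be a commutative ring and P ∈ R^{m×m} an idempotent matrix (P² = P). Define the polynomial R_P(X) := det(I_m + (X − 1)·P) ∈ R[X] and write R_P(X) = Σ_{i=0}^{m} r_i·X^i. Then: (i) R_P(1) = 1; (ii) R_P is multiplicative: det(I_m + (X·Y − 1)·P) = R_P(X)·R_P(Y) in R[X,Y]; consequently the coefficients r_0, …, r_m form a complete system of orthogonal idempotents: r_i·r_j = 0 for i ≠ j, r_i² = r_i, and Σ_i r_i = 1; (iii) r_0 = det(I_m − P); (iv) the annihilator of the R-module Im(P) (the range of the linear map x ↦ P·x on R^m) is the principal ideal generated by r_0. -/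
open Matrix Polynomial

/-- The "multiplicative polynomial" `R_P(X) = det(I_m + (X − 1)·P)` of an
idempotent matrix `P`. -/
noncomputable def multPoly {R : Type*} [CommRing R] {m : ℕ}
    (P : Matrix (Fin m) (Fin m) R) : R[X] :=
  ((1 : Matrix (Fin m) (Fin m) R[X]) + ((X : R[X]) - 1) • P.map C).det

/-!
For idempotent `P` one has `(1 + a P)(1 + b P) = 1 + (a + b + a b) P`; with `a = s - 1`,
`b = t - 1` this is `1 + (s t - 1) P`, so taking determinants gives `R_P(s t) = R_P(s) R_P(t)`
in every commutative `R`-algebra. Comparing the coefficients of `X^i Y^j` in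
`R_P(X Y) = R_P(X) R_P(Y)` gives `r_i r_j = δ_{ij} r_i`, and `R_P(1) = 1` gives `∑ r_i = 1`.
For the annihilator: `det (1 - P) • P = adj (1 - P) (1 - P) P = 0`, and conversely if `a P = 0`
then `det (1 - P) ≡ 1` modulo the annihilator of `a`, so `a = a det (1 - P)`.
-/

namespace Matrix

variable {n S : Type*} [Fintype n] [DecidableEq n] [CommRing S]

theorem one_add_smul_mul_one_add_smul_of_isIdempotentElem {Q : Matrix n n S}
    (hQ : IsIdempotentElem Q) (a b : S) :
    (1 + a • Q) * (1 + b • Q) = 1 + (a + b + a * b) • Q := by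
  simp only [add_mul, mul_add, Matrix.one_mul, Matrix.mul_one, smul_mul, Matrix.mul_smul,
    smul_smul, hQ.eq, add_smul, mul_comm b a]
  abel

theorem mem_annihilator_range_mulVecLin_iff {Q : Matrix n n S} {a : S} :
    a ∈ (LinearMap.range Q.mulVecLin).annihilator ↔ a • Q = 0 := by
  refine ⟨fun ha => ?_, fun ha => ?_⟩
  · ext i j
    have := congrFun (Submodule.mem_annihilator.mp ha _ ⟨Pi.single j 1, rfl⟩) i
    simpa [mulVec_single] using this
  · rw [Submodule.mem_annihilator]
    rintro _ ⟨v, rfl⟩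
    rw [mulVecLin_apply, ← smul_mulVec, ha, zero_mulVec]

theorem det_one_sub_smul_eq_zero {Q : Matrix n n S} (hQ : IsIdempotentElem Q) :
    (1 - Q).det • Q = 0 := by
  calc (1 - Q).det • Q = ((1 - Q).det • 1) * Q := by rw [smul_mul, Matrix.one_mul]
    _ = adjugate (1 - Q) * ((1 - Q) * Q) := by rw [← adjugate_mul, Matrix.mul_assoc]
    _ = 0 := by rw [sub_mul, Matrix.one_mul, hQ.eq, sub_self, Matrix.mul_zero]

theorem mul_det_one_sub_of_smul_eq_zero {Q : Matrix n n S} {a : S} (ha : a • Q = 0) :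
    a * (1 - Q).det = a := by
  let I := (Submodule.span S {a}).annihilator
  have hQI : Q.map (Ideal.Quotient.mk I) = 0 := by
    ext i j
    rw [map_apply, zero_apply, Ideal.Quotient.eq_zero_iff_mem,
      Submodule.mem_annihilator_span_singleton, smul_eq_mul, mul_comm]
    exact congrFun (congrFun ha i) j
  have hdet : (1 - Q).det - 1 ∈ I := by
    rw [← Ideal.Quotient.eq_zero_iff_mem, map_sub, map_one, RingHom.map_det, map_sub, map_one,
      RingHom.mapMatrix_apply, hQI, sub_zero, det_one, sub_self]
  rwa [Submodule.mem_annihilator_span_singleton, smul_eq_mul, sub_mul, one_mul, mul_comm,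
    sub_eq_zero] at hdet

theorem annihilator_range_mulVecLin_eq_span_det {Q : Matrix n n S} (hQ : IsIdempotentElem Q) :
    (LinearMap.range Q.mulVecLin).annihilator = Ideal.span {(1 - Q).det} := by
  ext a
  rw [mem_annihilator_range_mulVecLin_iff, Ideal.mem_span_singleton']
  refine ⟨fun ha => ⟨a, mul_det_one_sub_of_smul_eq_zero ha⟩, ?_⟩
  rintro ⟨b, rfl⟩
  rw [mul_smul, det_one_sub_smul_eq_zero hQ, smul_zero]

end Matrix

section multPoly

variable {R S : Type*} [CommRing R] [CommRing S] {m : ℕ}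

theorem coeff_coeff_eval₂_X_mul_C_X (p : R[X]) (i j : ℕ) :
    ((p.eval₂ (C.comp C) (X * C X)).coeff i).coeff j = if i = j then p.coeff i else 0 := by
  induction p using Polynomial.induction_on' with
  | add p q hp hq => simp only [eval₂_add, coeff_add, hp, hq, ← ite_add_zero]
  | monomial k a =>
    rw [eval₂_monomial, RingHom.comp_apply, mul_pow, ← C_pow, mul_comm (X ^ k), ← mul_assoc,
      ← C_mul, coeff_C_mul_X_pow, coeff_monomial]
    by_cases hik : i = k <;> by_cases hij : i = j <;> subst_vars <;> simp [*, coeff_X_pow, eq_comm]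

theorem eval₂_multPoly (f : R →+* S) (t : S) (P : Matrix (Fin m) (Fin m) R) :
    (multPoly P).eval₂ f t = (1 + (t - 1) • P.map f).det := by
  rw [multPoly, ← coe_eval₂RingHom, RingHom.map_det]
  congr 1
  ext i j
  by_cases h : i = j <;> simp [one_apply, h]

theorem eval_one_multPoly (P : Matrix (Fin m) (Fin m) R) : (multPoly P).eval 1 = 1 := by
  rw [eval, eval₂_multPoly, sub_self, zero_smul, add_zero, det_one]

theorem eval₂_multPoly_mul {P : Matrix (Fin m) (Fin m) R} (hP : IsIdempotentElem P)
    (f : R →+* S) (s t : S) :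
    (multPoly P).eval₂ f (s * t) = (multPoly P).eval₂ f s * (multPoly P).eval₂ f t := by
  have hPf : IsIdempotentElem (P.map f) := hP.map f.mapMatrix
  rw [eval₂_multPoly, eval₂_multPoly, eval₂_multPoly, ← det_mul,
    one_add_smul_mul_one_add_smul_of_isIdempotentElem hPf]
  ring_nf

theorem eval₂_multPoly_X_mul_C_X {P : Matrix (Fin m) (Fin m) R} (hP : IsIdempotentElem P) :
    (multPoly P).eval₂ (C.comp C) (X * C X) = (multPoly P).map C * C (multPoly P) := by
  rw [eval₂_multPoly_mul hP, ← hom_eval₂, eval₂_C_X]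
  rfl

theorem multPoly_eq_det_X_smul_add (P : Matrix (Fin m) (Fin m) R) :
    multPoly P = ((X : R[X]) • P.map C + (1 - P).map C).det := by
  rw [multPoly]
  congr 1
  ext i j : 1
  by_cases h : i = j <;> simp [one_apply, h] <;> ring

theorem natDegree_multPoly_le (P : Matrix (Fin m) (Fin m) R) : (multPoly P).natDegree ≤ m := by
  simpa [multPoly_eq_det_X_smul_add] using natDegree_det_X_add_C_le P (1 - P)

theorem coeff_multPoly_zero (P : Matrix (Fin m) (Fin m) R) :
    (multPoly P).coeff 0 = (1 - P).det := by
  rw [multPoly_eq_det_X_smul_add, coeff_det_X_add_C_zero]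

theorem coeff_multPoly_mul_coeff {P : Matrix (Fin m) (Fin m) R} (hP : IsIdempotentElem P)
    (i j : ℕ) :
    (multPoly P).coeff i * (multPoly P).coeff j =
      if i = j then (multPoly P).coeff i else 0 := by
  have h := congrArg (fun q => (q.coeff i).coeff j)
    (eval₂_multPoly_X_mul_C_X hP)
  simp only [coeff_coeff_eval₂_X_mul_C_X, coeff_mul_C, coeff_map, coeff_C_mul] at h
  exact h.symm

theorem sum_range_coeff_multPoly (P : Matrix (Fin m) (Fin m) R) :
    ∑ i ∈ Finset.range (m + 1), (multPoly P).coeff i = 1 := by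
  simpa [eval_one_multPoly] using
    (eval_eq_sum_range' (Nat.lt_succ_of_le (natDegree_multPoly_le P)) (1 : R)).symm

end multPoly

theorem stmt19 {R : Type*} [CommRing R] {m : ℕ}
    (P : Matrix (Fin m) (Fin m) R) (hP : P * P = P) :
    -- (i) R_P(1) = 1
    (multPoly P).eval 1 = 1 ∧
    -- (ii) multiplicativity: det(I + (X·Y − 1)·P) = R_P(X)·R_P(Y) in R[Y][X]
    ((1 : Matrix (Fin m) (Fin m) (Polynomial (Polynomial R))) +
        ((X : Polynomial (Polynomial R)) * C (X : Polynomial R) - 1) •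
          P.map (fun a => C (C a))).det =
      (multPoly P).map (C : R →+* Polynomial R) * C (multPoly P) ∧
    -- consequently the coefficients form a complete system of orthogonal idempotents
    (∀ i j : ℕ, i ≠ j → (multPoly P).coeff i * (multPoly P).coeff j = 0) ∧
    (∀ i : ℕ, (multPoly P).coeff i * (multPoly P).coeff i = (multPoly P).coeff i) ∧
    (∑ i ∈ Finset.range (m + 1), (multPoly P).coeff i) = 1 ∧
    -- (iii) r_0 = det(I − P)
    (multPoly P).coeff 0 = (1 - P).det ∧
    -- (iv) the annihilator of Im(P) is generated by r_0
    (LinearMap.range P.mulVecLin).annihilator = Ideal.span {(multPoly P).coeff 0} := by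
  refine ⟨eval_one_multPoly P,
    (eval₂_multPoly (C.comp C) _ P).symm.trans (eval₂_multPoly_X_mul_C_X hP),
    fun i j hij => ?_, fun i => ?_, sum_range_coeff_multPoly P, coeff_multPoly_zero P, ?_⟩
  · rw [coeff_multPoly_mul_coeff hP, if_neg hij]
  · rw [coeff_multPoly_mul_coeff hP, if_pos rfl]
  · rw [coeff_multPoly_zero, annihilator_range_mulVecLin_eq_span_det hP]
end
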